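/- arXiv:1710.06037 — 4 statements merged into one kernel-verified Lean document; each statement's English description precedes it below -/
import Mathlib

section
/- A Hamilton cycle H in L(X) is Euler tour compatible (i.e., corresponds to an Euler tour of X) if and only if for every vertex uv of L(X), one of the two neighbours of uv in H lies in the u-neighbourhood of uv and the other lies in the v-neighbourhood of uv. -/
open SimpleGraph
open scoped Classical

universe u v'

variable {V : Type*}

/-- `G` is regular of degree `k`. -/
def RegularDeg (G : SimpleGraph V) (k : ℕ) : Prop :=
  ∀ v, Nat.card (G.neighborSet v) = k

/-- A family of `n` pairwise edge-disjoint Hamilton cycles in `G`. -/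
def IsHamDecompFam (G : SimpleGraph V) {n : ℕ} (x : Fin n → V)
    (c : ∀ i, G.Walk (x i) (x i)) : Prop :=
  (∀ i, (c i).IsHamiltonianCycle) ∧
    ∀ i j, i ≠ j → ∀ e, e ∈ (c i).edges → e ∉ (c j).edges

/-- `G` contains `n` pairwise edge-disjoint Hamilton cycles. -/
def EdgeDisjointHamCycles (G : SimpleGraph V) (n : ℕ) : Prop :=
  ∃ (x : Fin n → V) (c : ∀ i, G.Walk (x i) (x i)), IsHamDecompFam G x c

/-- A graph regular of degree `2k` or `2k+1` is Hamilton decomposable if it contains a set of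
`k` pairwise edge-disjoint Hamilton cycles. -/
def HamiltonDecomposable (G : SimpleGraph V) : Prop :=
  ∃ k : ℕ, (RegularDeg G (2 * k) ∨ RegularDeg G (2 * k + 1)) ∧ EdgeDisjointHamCycles G k

/-- A multigraph: a vertex type, an edge type, and an assignment of (unordered) endpoints. -/
structure Multigraph : Type (max (u + 1) (v' + 1)) where
  V : Type u
  E : Type v'
  ends : E → Sym2 V

namespace Multigraph

variable (M : Multigraph)

/-- `M` has no loops. -/
def Loopless : Prop := ∀ e, ¬ (M.ends e).IsDiag

/-- The degree of a vertex of a (loopless) multigraph: number of incident edges. -/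
noncomputable def deg (v : M.V) : ℕ := Nat.card {e : M.E // v ∈ M.ends e}

/-- `M` is `k`-regular. -/
def Regular (k : ℕ) : Prop := ∀ v, M.deg v = k

/-- The underlying simple graph of `M`: adjacency given by existence of a connecting edge. -/
def toSG : SimpleGraph M.V where
  Adj x y := x ≠ y ∧ ∃ e, M.ends e = s(x, y)
  symm := ⟨by
    rintro x y ⟨hxy, e, he⟩
    exact ⟨hxy.symm, e, he.trans (Sym2.eq_swap)⟩⟩
  loopless := ⟨fun x h => h.1 rfl⟩

/-- `M` is connected. -/
def Connected : Prop := M.toSG.Connected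

/-- The line graph of a multigraph: vertices are edges, adjacency is sharing an endpoint. -/
def lineSG : SimpleGraph M.E where
  Adj e f := e ≠ f ∧ ∃ w, w ∈ M.ends e ∧ w ∈ M.ends f
  symm := ⟨by rintro e f ⟨hef, w, h1, h2⟩; exact ⟨hef.symm, w, h2, h1⟩⟩
  loopless := ⟨fun e h => h.1 rfl⟩

/-- A transition at a vertex `u`: a pair of (distinct) half-edges incident with `u`
(in a loopless multigraph, a pair of distinct edges incident with `u`). -/
structure Transition (M : Multigraph) where
  u : M.V
  e₁ : M.E
  e₂ : M.E
  ne : e₁ ≠ e₂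
  mem₁ : u ∈ M.ends e₁
  mem₂ : u ∈ M.ends e₂

/-- Endpoints of edges after splitting the vertex `t.u` into two vertices: the new vertex
`Sum.inr ()` receives the two half-edges of the transition `t`, and `Sum.inl t.u` keeps the
remaining half-edges at `t.u`. -/
noncomputable def splitEnds (t : M.Transition) (e : M.E) : Sym2 (M.V ⊕ Unit) :=
  if e = t.e₁ ∨ e = t.e₂ then
    Sym2.map (fun w => if w = t.u then Sum.inr () else Sum.inl w) (M.ends e)
  else Sym2.map Sum.inl (M.ends e)

/-- The multigraph `M^t` obtained by splitting at the transition `t`. -/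
noncomputable def split (t : M.Transition) : Multigraph where
  V := M.V ⊕ Unit
  E := M.E
  ends := M.splitEnds t

/-- A transition is separating if splitting at it increases the number of
connected components. -/
def IsSeparating (t : M.Transition) : Prop :=
  Nat.card (M.split t).toSG.ConnectedComponent > Nat.card M.toSG.ConnectedComponent

end Multigraph

/-- The multigraph underlying a simple graph. -/
def SimpleGraph.toMulti (G : SimpleGraph V) : Multigraph := ⟨V, G.edgeSet, Subtype.val⟩

/-- `G` has no separating transitions. -/
def NoSeparatingTransition (G : SimpleGraph V) : Prop :=
  ∀ t : Multigraph.Transition G.toMulti, ¬ G.toMulti.IsSeparating t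

/-- A Hamilton cycle `c` of `L(X)` is *Euler tour compatible at* the vertex `E = uv` of `L(X)`
if one of the two neighbours of `E` on `c` lies in the `u`-neighbourhood of `E` (the edges of
`X` at `u` other than `E`) and the other lies in the `v`-neighbourhood of `E`. -/
def CompatAt {W : Type*} {X : SimpleGraph W} {a : X.edgeSet} (c : X.lineGraph.Walk a a)
    (E : X.edgeSet) (u v : W) : Prop :=
  ∃ f g : X.edgeSet, f ≠ g ∧ {h : X.edgeSet | s(E, h) ∈ c.edges} = {f, g} ∧
    u ∈ (f : Sym2 W) ∧ v ∈ (g : Sym2 W)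

/-- A Hamilton cycle of `L(X)` is *Euler tour compatible* if it corresponds to an Euler tour
of `X`, i.e. its cyclic sequence of vertices is the sequence of edges of an Euler tour. -/
def EulerTourCompatible {W : Type*} {X : SimpleGraph W} {a : X.edgeSet}
    (c : X.lineGraph.Walk a a) : Prop :=
  ∃ (x : W) (p : X.Walk x x), p.IsEulerian ∧ (c.support.map Subtype.val).tail ~r p.edges

/-!
Index the Hamilton cycle cyclically as `E₀, E₁, …` (period `n`). Consecutive `Eₖ, Eₖ₊₁` are
distinct edges of `X` sharing a vertex, which is therefore unique; call it `tₖ`. Compatibility at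
`Eₖ₊₁` puts one endpoint of `Eₖ₊₁` in `Eₖ` and the other in `Eₖ₊₂`, so `tₖ ≠ tₖ₊₁` and
`Eₖ₊₁ = tₖtₖ₊₁`: then `t₀t₁⋯tₙ` is a closed walk whose edge sequence is the cycle, an Euler tour
since the cycle visits each edge of `X` exactly once. Conversely, if the cycle is a rotation of
the edge sequence `tₖtₖ₊₁` of an Euler tour, then the neighbours `tₖ₋₁tₖ` and `tₖ₊₁tₖ₊₂` of
`tₖtₖ₊₁` on the cycle contain `tₖ` and `tₖ₊₁` respectively.
-/

theorem Function.Periodic.map_mod_add_nat {α : Type*} {f : ℕ → α} {n : ℕ}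
    (hf : Function.Periodic f n) (k d : ℕ) : f (k % n + d) = f (k + d) := by
  conv_rhs => rw [← Nat.mod_add_div' k n, add_right_comm]
  have h := hf.nat_mul (k / n) (k % n + d)
  rw [Nat.cast_id] at h
  exact h.symm

theorem Function.Periodic.map_range_rotate {α : Type*} {f : ℕ → α} {n : ℕ}
    (hf : Function.Periodic f n) (r : ℕ) :
    ((List.range n).map f).rotate r = (List.range n).map (fun k => f (k + r)) := by
  apply List.ext_getElem (by simp)
  intro k _ _
  simp [List.getElem_rotate, hf.map_mod_nat]

theorem Function.Periodic.eq_of_map_range_eq {α : Type*} {f g : ℕ → α} {n : ℕ} (hn : 0 < n)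
    (hf : Function.Periodic f n) (hg : Function.Periodic g n)
    (h : (List.range n).map f = (List.range n).map g) : f = g := by
  funext k
  rw [← hf.map_mod_nat, ← hg.map_mod_nat]
  exact List.map_inj_left.mp h _ (List.mem_range.mpr (Nat.mod_lt k hn))

theorem Sym2.eq_of_mem_of_mem_of_ne {α : Type*} {e f : Sym2 α} (hef : e ≠ f) {x y : α}
    (hx : x ∈ e ∧ x ∈ f) (hy : y ∈ e ∧ y ∈ f) : x = y := by
  by_contra hxy
  exact hef (((Sym2.mem_and_mem_iff hxy).mp ⟨hx.1, hy.1⟩).trans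
    ((Sym2.mem_and_mem_iff hxy).mp ⟨hx.2, hy.2⟩).symm)

namespace SimpleGraph.Walk

variable {G : SimpleGraph V} {u : V}

def cycVert (c : G.Walk u u) (k : ℕ) : V := c.getVert (k % c.length)

theorem periodic_cycVert (c : G.Walk u u) : Function.Periodic c.cycVert c.length := by
  intro k
  simp [cycVert]

theorem cycVert_eq_getVert (c : G.Walk u u) {k : ℕ} (hk : k ≤ c.length) :
    c.cycVert k = c.getVert k := by
  rcases hk.lt_or_eq with hk | rfl
  · rw [cycVert, Nat.mod_eq_of_lt hk]
  · simp [cycVert]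

theorem support_tail_eq_map_cycVert (c : G.Walk u u) :
    c.support.tail = (List.range c.length).map (fun k => c.cycVert (k + 1)) := by
  apply List.ext_getElem (by simp)
  intro k _ hk
  simp only [List.getElem_tail, support_getElem_eq_getVert, List.getElem_map,
    List.getElem_range]
  rw [cycVert_eq_getVert _ (by simpa using hk)]

theorem edges_eq_map_cycVert (c : G.Walk u u) :
    c.edges = (List.range c.length).map (fun k => s(c.cycVert k, c.cycVert (k + 1))) := by
  apply List.ext_getElem (by simp)
  intro k _ hk
  simp only [getElem_edges, List.getElem_map, List.getElem_range]
  simp only [List.length_map, List.length_range] at hk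
  rw [cycVert_eq_getVert _ hk.le, cycVert_eq_getVert _ hk]

theorem mk_cycVert_mem_edges {c : G.Walk u u} (hc : ¬ c.Nil) (k : ℕ) :
    s(c.cycVert k, c.cycVert (k + 1)) ∈ c.edges := by
  rw [← c.periodic_cycVert.map_mod_nat k, ← c.periodic_cycVert.map_mod_add_nat,
    edges_eq_map_cycVert]
  exact List.mem_map_of_mem (List.mem_range.mpr (Nat.mod_lt k (not_nil_iff_lt_length.mp hc)))

theorem setOf_mk_mem_edges_eq_neighborSet {v : V} (c : G.Walk u v) (x : V) :
    {y | s(x, y) ∈ c.edges} = c.toSubgraph.neighborSet x := by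
  ext y
  exact adj_toSubgraph_iff_mem_edges.symm

theorem IsCycle.neighborSet_toSubgraph_cycVert {c : G.Walk u u} (hc : c.IsCycle) (k : ℕ) :
    c.toSubgraph.neighborSet (c.cycVert (k + 1)) = {c.cycVert k, c.cycVert (k + 2)} := by
  have hn := hc.three_le_length
  have hf := c.periodic_cycVert
  rw [← hf.map_mod_add_nat, ← hf.map_mod_nat k, ← hf.map_mod_add_nat k 2]
  have hk : k % c.length < c.length := Nat.mod_lt k (by omega)
  rcases Nat.lt_or_ge (k % c.length + 1) c.length with hk' | hk'
  · rw [cycVert_eq_getVert _ hk'.le, cycVert_eq_getVert _ hk.le, cycVert_eq_getVert _ hk',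
      hc.neighborSet_toSubgraph_internal (by omega) hk']
    rfl
  · replace hk' : k % c.length + 1 = c.length := by omega
    rw [hk', show k % c.length + 2 = 1 + c.length by omega, hf 1, cycVert_eq_getVert _ le_rfl,
      cycVert_eq_getVert _ hk.le, cycVert_eq_getVert _ (by omega), getVert_length,
      hc.neighborSet_toSubgraph_endpoint, Set.pair_comm, penultimate, snd]
    congr
    omega

theorem IsCycle.cycVert_ne_cycVert_add_two {c : G.Walk u u} (hc : c.IsCycle) (k : ℕ) :
    c.cycVert k ≠ c.cycVert (k + 2) := by
  intro h
  have h2 := hc.ncard_neighborSet_toSubgraph_eq_two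
    (c.getVert_mem_support ((k + 1) % c.length))
  rw [← cycVert, hc.neighborSet_toSubgraph_cycVert, h, Set.pair_eq_singleton,
    Set.ncard_singleton] at h2
  exact absurd h2 (by norm_num)

theorem IsHamiltonianCycle.exists_cycVert_add_eq [DecidableEq V] {c : G.Walk u u}
    (hc : c.IsHamiltonianCycle) (x : V) (d : ℕ) : ∃ k, c.cycVert (k + d) = x := by
  obtain ⟨j, rfl, hj⟩ := mem_support_iff_exists_getVert.mp (hc.mem_support x)
  obtain ⟨m, hm⟩ := Nat.exists_eq_add_one.mpr (not_nil_iff_lt_length.mp hc.isCycle.not_nil)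
  refine ⟨j + m * d, ?_⟩
  rw [← cycVert_eq_getVert _ hj, ← c.periodic_cycVert.nat_mul d j, hm]
  congr 1
  push_cast
  ring

theorem exists_walk_edges_eq_map_range (t : ℕ → V) (n : ℕ)
    (h : ∀ k < n, G.Adj (t k) (t (k + 1))) :
    ∃ p : G.Walk (t 0) (t n), p.edges = (List.range n).map (fun k => s(t k, t (k + 1))) := by
  induction n with
  | zero => exact ⟨nil, rfl⟩
  | succ n ih =>
    obtain ⟨p, hp⟩ := ih fun k hk => h k (by omega)
    exact ⟨p.concat (h n (by omega)), by simp [edges_concat, hp, List.range_succ]⟩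

end SimpleGraph.Walk

open Walk

section LineGraph

variable {W : Type*} {X : SimpleGraph W} {a : X.edgeSet} {c : X.lineGraph.Walk a a}

theorem compatAt_iff_of_neighbors {E A B : X.edgeSet} {u v : W} (hAB : A ≠ B)
    (hE : {h | s(E, h) ∈ c.edges} = {A, B}) :
    CompatAt c E u v ↔
      u ∈ (A : Sym2 W) ∧ v ∈ (B : Sym2 W) ∨ u ∈ (B : Sym2 W) ∧ v ∈ (A : Sym2 W) := by
  constructor
  · rintro ⟨f, g, -, hfg, hu, hv⟩
    rcases Set.pair_eq_pair_iff.mp (hE.symm.trans hfg) with ⟨rfl, rfl⟩ | ⟨rfl, rfl⟩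
    · exact Or.inl ⟨hu, hv⟩
    · exact Or.inr ⟨hu, hv⟩
  · rintro (⟨hu, hv⟩ | ⟨hu, hv⟩)
    · exact ⟨A, B, hAB, hE, hu, hv⟩
    · exact ⟨B, A, hAB.symm, hE.trans (Set.pair_comm A B), hu, hv⟩

theorem compatAt_cycVert_iff (hc : c.IsCycle) (k : ℕ) {u v : W} :
    CompatAt c (c.cycVert (k + 1)) u v ↔
      u ∈ (c.cycVert k : Sym2 W) ∧ v ∈ (c.cycVert (k + 2) : Sym2 W) ∨
        u ∈ (c.cycVert (k + 2) : Sym2 W) ∧ v ∈ (c.cycVert k : Sym2 W) :=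
  compatAt_iff_of_neighbors (hc.cycVert_ne_cycVert_add_two k)
    ((c.setOf_mk_mem_edges_eq_neighborSet _).trans (hc.neighborSet_toSubgraph_cycVert k))

theorem exists_cycVert_shift_of_isRotated (hc : ¬ c.Nil) {x : W} {p : X.Walk x x}
    (h : (c.support.map Subtype.val).tail ~r p.edges) :
    ∃ r, ∀ i, s(p.cycVert i, p.cycVert (i + 1)) = (c.cycVert (r + i) : Sym2 W) := by
  obtain ⟨r, hr⟩ := h
  have hcyc : Function.Periodic (fun k => (c.cycVert (k + 1) : Sym2 W)) c.length :=
    fun k => by simp only [add_right_comm k, c.periodic_cycVert _]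
  have hwalk : Function.Periodic (fun i => s(p.cycVert i, p.cycVert (i + 1))) p.length :=
    fun i => by simp only [add_right_comm i, p.periodic_cycVert _]
  rw [← List.map_tail, support_tail_eq_map_cycVert, List.map_map, Function.comp_def,
    hcyc.map_range_rotate, edges_eq_map_cycVert] at hr
  have hlen : p.length = c.length := by simpa using congrArg List.length hr.symm
  rw [hlen] at hr hwalk
  have hshift := Function.Periodic.eq_of_map_range_eq (not_nil_iff_lt_length.mp hc) hwalk
    (hcyc.add_const r) hr.symm
  refine ⟨r + 1, fun i => ?_⟩
  rw [congrFun hshift i, show r + 1 + i = i + r + 1 by omega]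

theorem compatAt_of_eulerTourCompatible (hc : c.IsHamiltonianCycle) (h : EulerTourCompatible c)
    {u v : W} {E : X.edgeSet} (hE : (E : Sym2 W) = s(u, v)) : CompatAt c E u v := by
  obtain ⟨x, p, -, hp⟩ := h
  obtain ⟨r, hr⟩ := exists_cycVert_shift_of_isRotated hc.isCycle.not_nil hp
  obtain ⟨i, hi⟩ := hc.exists_cycVert_add_eq E (r + 1)
  rw [show i + (r + 1) = r + i + 1 by omega] at hi
  subst hi
  rw [compatAt_cycVert_iff hc.isCycle]
  have hprev : p.cycVert (i + 1) ∈ (c.cycVert (r + i) : Sym2 W) := hr i ▸ Sym2.mem_mk_right _ _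
  have hnext : p.cycVert (i + 2) ∈ (c.cycVert (r + i + 2) : Sym2 W) :=
    hr (i + 2) ▸ Sym2.mem_mk_left _ _
  rcases Sym2.eq_iff.mp ((hr (i + 1)).trans hE) with ⟨rfl, rfl⟩ | ⟨rfl, rfl⟩
  · exact Or.inl ⟨hprev, hnext⟩
  · exact Or.inr ⟨hnext, hprev⟩

theorem eulerTourCompatible_of_edges_eq (hc : c.IsHamiltonianCycle) {x : W} (p : X.Walk x x)
    (hp : p.edges = c.support.tail.map Subtype.val) : EulerTourCompatible c := by
  refine ⟨x, p, (isEulerian_iff p).mpr ⟨?_, fun e he => ?_⟩, ?_⟩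
  · rw [isTrail_def, hp]
    exact hc.support_nodup.map Subtype.val_injective
  · rw [hp, ← support_tail_of_not_nil c hc.isCycle.not_nil]
    exact List.mem_map_of_mem (hc.isHamiltonian_tail.mem_support ⟨e, he⟩)
  · rw [← List.map_tail, hp]

theorem eulerTourCompatible_of_compatAt (hc : c.IsHamiltonianCycle)
    (h : ∀ (u v : W) (E : X.edgeSet), (E : Sym2 W) = s(u, v) → CompatAt c E u v) :
    EulerTourCompatible c := by
  have hadj : ∀ k, X.lineGraph.Adj (c.cycVert k) (c.cycVert (k + 1)) := fun k =>
    c.adj_of_mem_edges (mk_cycVert_mem_edges hc.isCycle.not_nil k)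
  choose t ht using fun k => (lineGraph_adj_iff_exists.mp (hadj k)).2
  have hunique : ∀ k x, x ∈ (c.cycVert k : Sym2 W) → x ∈ (c.cycVert (k + 1) : Sym2 W) →
      x = t k := fun k x h₁ h₂ =>
    Sym2.eq_of_mem_of_mem_of_ne (Subtype.coe_injective.ne (hadj k).ne) ⟨h₁, h₂⟩ (ht k)
  have hedge : ∀ k, (c.cycVert (k + 1) : Sym2 W) = s(t k, t (k + 1)) := by
    intro k
    induction hE : (c.cycVert (k + 1) : Sym2 W) using Sym2.ind with | h x y => ?_
    have hx : x ∈ (c.cycVert (k + 1) : Sym2 W) := hE ▸ Sym2.mem_mk_left x y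
    have hy : y ∈ (c.cycVert (k + 1) : Sym2 W) := hE ▸ Sym2.mem_mk_right x y
    rcases (compatAt_cycVert_iff hc.isCycle k).mp (h x y _ hE) with ⟨hx', hy'⟩ | ⟨hx', hy'⟩
    · rw [hunique k x hx' hx, hunique (k + 1) y hy hy']
    · rw [hunique k y hy' hy, hunique (k + 1) x hx hx', Sym2.eq_swap]
  have hclosed : t c.length = t 0 := by
    have h₀ : c.cycVert c.length = c.cycVert 0 := by simpa using c.periodic_cycVert 0
    have h₁ : c.cycVert (c.length + 1) = c.cycVert (0 + 1) := by
      rw [add_comm]; exact c.periodic_cycVert 1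
    exact hunique 0 _ (h₀ ▸ (ht c.length).1) (h₁ ▸ (ht c.length).2)
  obtain ⟨p, hp⟩ := exists_walk_edges_eq_map_range t c.length
    fun k _ => X.mem_edgeSet.mp (hedge k ▸ (c.cycVert (k + 1)).prop)
  refine eulerTourCompatible_of_edges_eq hc (p.copy rfl hclosed) ?_
  rw [edges_copy, hp, support_tail_eq_map_cycVert, List.map_map]
  exact List.map_congr_left fun k _ => (hedge k).symm

end LineGraph

/-- A Hamilton cycle `c` in `L(X)` is Euler tour compatible if and only if
for every vertex `uv` of `L(X)`, one of the two neighbours of `uv` on `c` lies in the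
`u`-neighbourhood of `uv` and the other lies in the `v`-neighbourhood of `uv`. -/
theorem euler_tour_compatible_iff_compat_everywhere {W : Type*} (X : SimpleGraph W)
    {a : X.edgeSet} (c : X.lineGraph.Walk a a) (hc : c.IsHamiltonianCycle) :
    EulerTourCompatible c ↔
      ∀ (u v : W) (E : X.edgeSet), (E : Sym2 W) = s(u, v) → CompatAt c E u v :=
  ⟨fun h _ _ _ hE => compatAt_of_eulerTourCompatible hc h hE,
    eulerTourCompatible_of_compatAt hc⟩
end

section
/- Let X and X' be vertex-disjoint k-regular simple graphs, uv an edge of X, u'v' an edge of X', and let Y be the insertion of X' − u'v' into the edge uv of X. If L(X) has a Hamilton decomposition H that is Euler tour compatible at the vertex uv, and L(X') has a Hamilton decomposition H' that is Euler tour compatible at u'v', then L(Y) has a Hamilton decomposition H*; moreover, for any vertex xy ≠ uv of L(X) at which H is Euler tour compatible, H* is also Euler tour compatible at xy. -/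
open SimpleGraph
open scoped Classical

universe u v'

variable {V : Type*}

/-- The insertion of `X' - u'v'` into the edge `uv` of `X`: in the disjoint union, the edges
`uv` and `u'v'` are replaced by edges `uu'` and `vv'`. -/
def insertSimple {W W' : Type*} (X : SimpleGraph W) (X' : SimpleGraph W')
    (u v : W) (u' v' : W') : SimpleGraph (W ⊕ W') :=
  SimpleGraph.fromEdgeSet
    ((Sym2.map Sum.inl '' (X.edgeSet \ {s(u, v)})) ∪
      (Sym2.map Sum.inr '' (X'.edgeSet \ {s(u', v')})) ∪
      {s(Sum.inl u, Sum.inr u'), s(Sum.inl v, Sum.inr v')})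

/-!
A Hamilton cycle `H` of `L(X)` that is Euler tour compatible at `uv` reaches `uv` from an edge
`f ∋ u` and leaves it towards an edge `g ∋ v`, so `H - uv` is a Hamilton path of `L(X) - uv`
from `f` to `g`; likewise `H' - u'v'` is a Hamilton path of `L(X') - u'v'` from `f' ∋ u'` to
`g' ∋ v'`. Both paths survive in `L(Y)`, where `uu'` is adjacent to `f'` and `f`, and `vv'` to
`g'` and `g`, so `uu' → f' ⋯ g' → vv' → g ⋯ f → uu'` is a Hamilton cycle of `L(Y)`.

Contracting the `X'`-side of `Y` onto `uv` (resp. the `X`-side onto `u'v'`) projects every edge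
of this new cycle onto an edge of `H` (resp. `H'`), and no edge of `L(Y)` joins the two sides.
Edge-disjointness of the new cycles follows from that of the old ones, and at a vertex `xy ≠ uv`
the projection matches the two neighbours of `xy` on the new cycle with those on `H`.
-/

namespace SimpleGraph.Walk

variable {G : SimpleGraph V}

theorem mk_self_notMem_edges {a b : V} (p : G.Walk a b) (x : V) : s(x, x) ∉ p.edges :=
  fun h => (p.adj_of_mem_edges h).ne rfl

theorem setOf_mem_edges_cons_concat {x y z : V} {p : G.Walk y z} (hx : x ∉ p.support)
    (hxy : G.Adj x y) (hzx : G.Adj z x) :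
    {w | s(x, w) ∈ (cons hxy (p.concat hzx)).edges} = {y, z} := by
  ext w
  have : s(x, w) ∉ p.edges := fun h => hx (p.fst_mem_support_of_mem_edges h)
  simp [edges_concat, this, Sym2.eq_swap (a := z), hxy.ne, hzx.ne.symm]

theorem IsHamiltonianCycle.exists_path_mem_edges_iff [DecidableEq V] {a : V} {c : G.Walk a a}
    (hc : c.IsHamiltonianCycle) (x : V) :
    ∃ (y z : V) (hxy : G.Adj x y) (hzx : G.Adj z x) (p : G.Walk y z), p.IsPath ∧
      (∀ w, w ∈ p.support ↔ w ≠ x) ∧ y ≠ z ∧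
      ∀ e, e ∈ c.edges ↔ e ∈ (cons hxy (p.concat hzx)).edges := by
  set r := c.rotate x (hc.mem_support x)
  have hr : r.IsHamiltonianCycle := hc.rotate _
  have hq : r.tail.IsHamiltonian := hr.isHamiltonian_tail
  have hnil : ¬ r.tail.Nil := fun h => (r.adj_snd hr.not_nil).ne h.eq.symm
  set p := r.tail.dropLast
  have hr_eq : r = cons (r.adj_snd hr.not_nil) (p.concat (r.tail.adj_penultimate hnil)) := by
    rw [concat_dropLast, cons_tail_eq _ hr.not_nil]
  have hsupp : p.support ++ [x] = r.tail.support := support_dropLast_concat hnil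
  have hnodup : (p.support ++ [x]).Nodup := hsupp ▸ hq.isPath.support_nodup
  refine ⟨_, _, r.adj_snd hr.not_nil, r.tail.adj_penultimate hnil, p,
    (isPath_def _).mpr hnodup.of_append_left, fun w => ⟨?_, fun hw => ?_⟩, ?_, fun e => ?_⟩
  · rintro hw rfl
    exact List.disjoint_of_nodup_append hnodup hw (List.mem_singleton_self _)
  · have : w ∈ p.support ++ [x] := hsupp ▸ hq.mem_support w
    simpa [hw] using this
  · intro hyz
    have := hr.isCycle.edges_nodup
    rw [hr_eq, edges_cons, edges_concat] at this
    simp [← hyz, Sym2.eq_swap] at this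
  · rw [← hr_eq]
    exact (c.rotate_edges x _).mem_iff.symm

theorem IsHamiltonianCycle.exists_ne_setOf_mem_edges_eq [DecidableEq V] {a : V}
    {c : G.Walk a a} (hc : c.IsHamiltonianCycle) (x : V) :
    ∃ y z, y ≠ z ∧ {w | s(x, w) ∈ c.edges} = {y, z} := by
  obtain ⟨y, z, hxy, hzx, p, -, hsupp, hyz, hc⟩ := hc.exists_path_mem_edges_iff x
  refine ⟨y, z, hyz, ?_⟩
  simp_rw [hc]
  exact setOf_mem_edges_cons_concat (by simp [hsupp]) hxy hzx

theorem IsHamiltonianCycle.exists_path_of_setOf_mem_edges_eq [DecidableEq V] {a : V}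
    {c : G.Walk a a} (hc : c.IsHamiltonianCycle) {x f g : V} (hfg : f ≠ g)
    (hN : {w | s(x, w) ∈ c.edges} = {f, g}) :
    ∃ (hxf : G.Adj x f) (hgx : G.Adj g x) (p : G.Walk f g), p.IsPath ∧
      (∀ w, w ∈ p.support ↔ w ≠ x) ∧
      ∀ e, e ∈ c.edges ↔ e ∈ (cons hxf (p.concat hgx)).edges := by
  obtain ⟨y, z, hxy, hzx, p, hp, hsupp, -, hc⟩ := hc.exists_path_mem_edges_iff x
  have hyz : ({y, z} : Set V) = {f, g} := by
    rw [← hN, ← setOf_mem_edges_cons_concat (p := p) (by simp [hsupp]) hxy hzx]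
    simp_rw [hc]
  rcases Set.pair_eq_pair_iff.mp hyz with ⟨rfl, rfl⟩ | ⟨rfl, rfl⟩
  · exact ⟨hxy, hzx, p, hp, hsupp, hc⟩
  · refine ⟨hzx.symm, hxy.symm, p.reverse, hp.reverse, by simpa using hsupp, fun e => ?_⟩
    rw [hc]
    simp [edges_concat, Sym2.eq_swap]
    tauto

theorem IsPath.isHamiltonianCycle_cons_concat [DecidableEq V] {x y z : V} {p : G.Walk y z}
    (hp : p.IsPath) (hsupp : ∀ w, w ∈ p.support ↔ w ≠ x) (hyz : y ≠ z) (hxy : G.Adj x y)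
    (hzx : G.Adj z x) : (cons hxy (p.concat hzx)).IsHamiltonianCycle := by
  have hx : x ∉ p.support := fun h => (hsupp x).mp h rfl
  have hq : (p.concat hzx).IsPath := hp.concat hx hzx
  rw [isHamiltonianCycle_iff_isCycle_and_support_count_tail_eq_one, cons_isCycle_iff,
    support_cons, List.tail_cons]
  refine ⟨⟨hq, fun hmem => ?_⟩, fun w => List.count_eq_one_of_mem hq.support_nodup ?_⟩
  · rw [edges_concat, List.concat_eq_append, List.mem_append, List.mem_singleton] at hmem
    rcases hmem with hmem | hmem
    · exact hx (p.fst_mem_support_of_mem_edges hmem)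
    · rcases Sym2.eq_iff.mp hmem with ⟨-, h⟩ | ⟨-, h⟩
      exacts [hxy.ne h.symm, hyz h]
  · rw [support_concat, List.mem_append, List.mem_singleton, hsupp]
    exact (eq_or_ne w x).symm

theorem edges_subset_edgeSet_deleteIncidenceSet {a b x : V} {p : G.Walk a b}
    (hx : x ∉ p.support) : ∀ e ∈ p.edges, e ∈ (G.deleteIncidenceSet x).edgeSet := by
  intro e he
  rw [edgeSet_deleteIncidenceSet]
  exact ⟨p.edges_subset_edgeSet he, fun h => hx (p.mem_support_of_mem_edges he h.2)⟩

end SimpleGraph.Walk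

namespace insertSimple

open Sum Walk

variable {W W' : Type*} {X : SimpleGraph W} {X' : SimpleGraph W'} {u v : W} {u' v' : W'}

local notation "Y" => insertSimple X X' u v u' v'

theorem mem_edgeSet {e : Sym2 (W ⊕ W')} :
    e ∈ (Y).edgeSet ↔
      (∃ e₀ ∈ X.edgeSet, e₀ ≠ s(u, v) ∧ Sym2.map inl e₀ = e) ∨
      (∃ e₀ ∈ X'.edgeSet, e₀ ≠ s(u', v') ∧ Sym2.map inr e₀ = e) ∨
      e = s(inl u, inr u') ∨ e = s(inl v, inr v') := by
  rw [insertSimple, edgeSet_fromEdgeSet]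
  simp only [Set.mem_sdiff, Set.mem_union, Set.mem_image, Set.mem_insert_iff,
    Set.mem_singleton_iff, Sym2.mem_diagSet, and_assoc, or_assoc]
  refine and_iff_left_of_imp ?_
  rintro (⟨e₀, he, -, rfl⟩ | ⟨e₀, he, -, rfl⟩ | rfl | rfl)
  · simpa [Sym2.isDiag_map inl_injective] using X.not_isDiag_of_mem_edgeSet he
  · simpa [Sym2.isDiag_map inr_injective] using X'.not_isDiag_of_mem_edgeSet he
  · simp
  · simp

def edgeU : (Y).edgeSet := ⟨s(inl u, inr u'), mem_edgeSet.mpr (Or.inr (Or.inr (Or.inl rfl)))⟩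

def edgeV : (Y).edgeSet := ⟨s(inl v, inr v'), mem_edgeSet.mpr (Or.inr (Or.inr (Or.inr rfl)))⟩

/- `uv` is not an edge of `Y`; sending it to `uu'` (and `u'v'` likewise) makes `projLeft`
and `projRight` below left inverses of `inlEdge` and `inrEdge` on all edges. -/
noncomputable def inlEdge (D : X.edgeSet) : (Y).edgeSet :=
  if h : (D : Sym2 W) = s(u, v) then edgeU
  else ⟨Sym2.map inl D, mem_edgeSet.mpr (Or.inl ⟨D, D.2, h, rfl⟩)⟩

noncomputable def inrEdge (D : X'.edgeSet) : (Y).edgeSet :=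
  if h : (D : Sym2 W') = s(u', v') then edgeU
  else ⟨Sym2.map inr D, mem_edgeSet.mpr (Or.inr (Or.inl ⟨D, D.2, h, rfl⟩))⟩

/- Contraction of the `X'`-side of `Y` onto `uv`: an edge of `Y` coming from `X` is sent back
to it, every other edge to `uv`. -/
noncomputable def projLeft (huv : X.Adj u v) (F : (Y).edgeSet) : X.edgeSet :=
  if h : ∃ D : X.edgeSet, Sym2.map inl (D : Sym2 W) = (F : Sym2 (W ⊕ W')) then h.choose
  else ⟨s(u, v), huv⟩

noncomputable def projRight (huv' : X'.Adj u' v') (F : (Y).edgeSet) : X'.edgeSet :=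
  if h : ∃ D : X'.edgeSet, Sym2.map inr (D : Sym2 W') = (F : Sym2 (W ⊕ W')) then h.choose
  else ⟨s(u', v'), huv'⟩

theorem coe_inlEdge {D : X.edgeSet} (hD : (D : Sym2 W) ≠ s(u, v)) :
    ((inlEdge D : (Y).edgeSet) : Sym2 (W ⊕ W')) = Sym2.map inl D := by
  rw [inlEdge, dif_neg hD]

theorem coe_inrEdge {D : X'.edgeSet} (hD : (D : Sym2 W') ≠ s(u', v')) :
    ((inrEdge D : (Y).edgeSet) : Sym2 (W ⊕ W')) = Sym2.map inr D := by
  rw [inrEdge, dif_neg hD]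

theorem inlEdge_or_inrEdge_or_edgeU_or_edgeV (F : (Y).edgeSet) :
    (∃ D : X.edgeSet, (D : Sym2 W) ≠ s(u, v) ∧ inlEdge D = F) ∨
    (∃ D : X'.edgeSet, (D : Sym2 W') ≠ s(u', v') ∧ inrEdge D = F) ∨
    F = edgeU ∨ F = edgeV := by
  obtain ⟨F, hF⟩ := F
  rcases mem_edgeSet.mp hF with ⟨D, hD, hne, rfl⟩ | ⟨D, hD, hne, rfl⟩ | rfl | rfl
  · exact Or.inl ⟨⟨D, hD⟩, hne, Subtype.ext (coe_inlEdge hne)⟩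
  · exact Or.inr (Or.inl ⟨⟨D, hD⟩, hne, Subtype.ext (coe_inrEdge hne)⟩)
  · exact Or.inr (Or.inr (Or.inl rfl))
  · exact Or.inr (Or.inr (Or.inr rfl))

theorem edgeU_ne_edgeV (huv : X.Adj u v) : (edgeU : (Y).edgeSet) ≠ edgeV := fun h => by
  have := congrArg Subtype.val h
  simp [edgeU, edgeV, huv.ne] at this

theorem projLeft_eq_of_inr_mem (huv : X.Adj u v) {F : (Y).edgeSet} {w : W'}
    (hw : inr w ∈ (F : Sym2 (W ⊕ W'))) : projLeft huv F = ⟨s(u, v), huv⟩ := by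
  refine dif_neg fun ⟨D, hD⟩ => ?_
  rw [← hD, Sym2.mem_map] at hw
  obtain ⟨_, -, h⟩ := hw
  exact inl_ne_inr h

theorem projRight_eq_of_inl_mem (huv' : X'.Adj u' v') {F : (Y).edgeSet} {w : W}
    (hw : inl w ∈ (F : Sym2 (W ⊕ W'))) : projRight huv' F = ⟨s(u', v'), huv'⟩ := by
  refine dif_neg fun ⟨D, hD⟩ => ?_
  rw [← hD, Sym2.mem_map] at hw
  obtain ⟨_, -, h⟩ := hw
  exact inr_ne_inl h

@[simp]
theorem projLeft_edgeU (huv : X.Adj u v) :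
    projLeft huv (edgeU : (Y).edgeSet) = ⟨s(u, v), huv⟩ :=
  projLeft_eq_of_inr_mem huv (w := u') (by simp [edgeU])

@[simp]
theorem projLeft_edgeV (huv : X.Adj u v) :
    projLeft huv (edgeV : (Y).edgeSet) = ⟨s(u, v), huv⟩ :=
  projLeft_eq_of_inr_mem huv (w := v') (by simp [edgeV])

@[simp]
theorem projRight_edgeU (huv' : X'.Adj u' v') :
    projRight huv' (edgeU : (Y).edgeSet) = ⟨s(u', v'), huv'⟩ :=
  projRight_eq_of_inl_mem huv' (w := u) (by simp [edgeU])

@[simp]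
theorem projRight_edgeV (huv' : X'.Adj u' v') :
    projRight huv' (edgeV : (Y).edgeSet) = ⟨s(u', v'), huv'⟩ :=
  projRight_eq_of_inl_mem huv' (w := v) (by simp [edgeV])

@[simp]
theorem projLeft_inlEdge (huv : X.Adj u v) (D : X.edgeSet) :
    projLeft huv (inlEdge D : (Y).edgeSet) = D := by
  by_cases hD : (D : Sym2 W) = s(u, v)
  · rw [inlEdge, dif_pos hD, projLeft_edgeU]
    exact Subtype.ext hD.symm
  · have h : ∃ D' : X.edgeSet,
        Sym2.map inl (D' : Sym2 W) = ((inlEdge D : (Y).edgeSet) : Sym2 (W ⊕ W')) :=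
      ⟨D, (coe_inlEdge hD).symm⟩
    rw [projLeft, dif_pos h]
    exact Subtype.ext (Sym2.map.injective inl_injective (h.choose_spec.trans (coe_inlEdge hD)))

@[simp]
theorem projRight_inrEdge (huv' : X'.Adj u' v') (D : X'.edgeSet) :
    projRight huv' (inrEdge D : (Y).edgeSet) = D := by
  by_cases hD : (D : Sym2 W') = s(u', v')
  · rw [inrEdge, dif_pos hD, projRight_edgeU]
    exact Subtype.ext hD.symm
  · have h : ∃ D' : X'.edgeSet,
        Sym2.map inr (D' : Sym2 W') = ((inrEdge D : (Y).edgeSet) : Sym2 (W ⊕ W')) :=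
      ⟨D, (coe_inrEdge hD).symm⟩
    rw [projRight, dif_pos h]
    exact Subtype.ext (Sym2.map.injective inr_injective (h.choose_spec.trans (coe_inrEdge hD)))

@[simp]
theorem projLeft_inrEdge (huv : X.Adj u v) (D : X'.edgeSet) :
    projLeft huv (inrEdge D : (Y).edgeSet) = ⟨s(u, v), huv⟩ := by
  by_cases hD : (D : Sym2 W') = s(u', v')
  · rw [inrEdge, dif_pos hD, projLeft_edgeU]
  · refine projLeft_eq_of_inr_mem huv (w := (D : Sym2 W').out.1) ?_
    rw [coe_inrEdge hD]
    exact Sym2.mem_map.mpr ⟨_, Sym2.out_fst_mem _, rfl⟩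

@[simp]
theorem projRight_inlEdge (huv' : X'.Adj u' v') (D : X.edgeSet) :
    projRight huv' (inlEdge D : (Y).edgeSet) = ⟨s(u', v'), huv'⟩ := by
  by_cases hD : (D : Sym2 W) = s(u, v)
  · rw [inlEdge, dif_pos hD, projRight_edgeU]
  · refine projRight_eq_of_inl_mem huv' (w := (D : Sym2 W).out.1) ?_
    rw [coe_inlEdge hD]
    exact Sym2.mem_map.mpr ⟨_, Sym2.out_fst_mem _, rfl⟩

theorem inlEdge_injective (huv : X.Adj u v) :
    Function.Injective (inlEdge : X.edgeSet → (Y).edgeSet) :=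
  Function.LeftInverse.injective (projLeft_inlEdge huv)

theorem inrEdge_injective (huv' : X'.Adj u' v') :
    Function.Injective (inrEdge : X'.edgeSet → (Y).edgeSet) :=
  Function.LeftInverse.injective (projRight_inrEdge huv')

theorem inlEdge_ne_edgeU (huv : X.Adj u v) {D : X.edgeSet} (hD : (D : Sym2 W) ≠ s(u, v)) :
    (inlEdge D : (Y).edgeSet) ≠ edgeU :=
  fun h => hD (by simpa using congrArg (fun F => (projLeft huv F : Sym2 W)) h)

theorem inlEdge_ne_edgeV (huv : X.Adj u v) {D : X.edgeSet} (hD : (D : Sym2 W) ≠ s(u, v)) :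
    (inlEdge D : (Y).edgeSet) ≠ edgeV :=
  fun h => hD (by simpa using congrArg (fun F => (projLeft huv F : Sym2 W)) h)

theorem inrEdge_ne_inlEdge (huv : X.Adj u v) {D : X.edgeSet} (hD : (D : Sym2 W) ≠ s(u, v))
    (D' : X'.edgeSet) : (inrEdge D' : (Y).edgeSet) ≠ inlEdge D :=
  fun h => hD (by simpa using congrArg (fun F => (projLeft huv F : Sym2 W)) h.symm)

theorem inrEdge_ne_edgeU (huv' : X'.Adj u' v') {D : X'.edgeSet}
    (hD : (D : Sym2 W') ≠ s(u', v')) : (inrEdge D : (Y).edgeSet) ≠ edgeU :=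
  fun h => hD (by simpa using congrArg (fun F => (projRight huv' F : Sym2 W')) h)

theorem inrEdge_ne_edgeV (huv' : X'.Adj u' v') {D : X'.edgeSet}
    (hD : (D : Sym2 W') ≠ s(u', v')) : (inrEdge D : (Y).edgeSet) ≠ edgeV :=
  fun h => hD (by simpa using congrArg (fun F => (projRight huv' F : Sym2 W')) h)

theorem inlEdge_adj_edgeU (huv : X.Adj u v) {D : X.edgeSet} (hD : (D : Sym2 W) ≠ s(u, v))
    (hu : u ∈ (D : Sym2 W)) : (Y).lineGraph.Adj (inlEdge D) edgeU := by
  refine lineGraph_adj_iff_exists.mpr ⟨inlEdge_ne_edgeU huv hD, inl u, ?_, by simp [edgeU]⟩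
  rw [coe_inlEdge hD]
  exact Sym2.mem_map.mpr ⟨u, hu, rfl⟩

theorem edgeV_adj_inlEdge (huv : X.Adj u v) {D : X.edgeSet} (hD : (D : Sym2 W) ≠ s(u, v))
    (hv : v ∈ (D : Sym2 W)) : (Y).lineGraph.Adj edgeV (inlEdge D) := by
  refine lineGraph_adj_iff_exists.mpr
    ⟨(inlEdge_ne_edgeV huv hD).symm, inl v, by simp [edgeV], ?_⟩
  rw [coe_inlEdge hD]
  exact Sym2.mem_map.mpr ⟨v, hv, rfl⟩

theorem edgeU_adj_inrEdge (huv' : X'.Adj u' v') {D : X'.edgeSet}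
    (hD : (D : Sym2 W') ≠ s(u', v')) (hu : u' ∈ (D : Sym2 W')) :
    (Y).lineGraph.Adj edgeU (inrEdge D) := by
  refine lineGraph_adj_iff_exists.mpr
    ⟨(inrEdge_ne_edgeU huv' hD).symm, inr u', by simp [edgeU], ?_⟩
  rw [coe_inrEdge hD]
  exact Sym2.mem_map.mpr ⟨u', hu, rfl⟩

theorem inrEdge_adj_edgeV (huv' : X'.Adj u' v') {D : X'.edgeSet}
    (hD : (D : Sym2 W') ≠ s(u', v')) (hv : v' ∈ (D : Sym2 W')) :
    (Y).lineGraph.Adj (inrEdge D) edgeV := by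
  refine lineGraph_adj_iff_exists.mpr ⟨inrEdge_ne_edgeV huv' hD, inr v', ?_, by simp [edgeV]⟩
  rw [coe_inrEdge hD]
  exact Sym2.mem_map.mpr ⟨v', hv, rfl⟩

noncomputable def inlHom (huv : X.Adj u v) :
    X.lineGraph.deleteIncidenceSet ⟨s(u, v), huv⟩ →g (Y).lineGraph where
  toFun := inlEdge
  map_rel' {D₁ D₂} h := by
    obtain ⟨hadj, h₁, h₂⟩ := deleteIncidenceSet_adj.mp h
    obtain ⟨-, w, hw₁, hw₂⟩ := lineGraph_adj_iff_exists.mp hadj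
    refine lineGraph_adj_iff_exists.mpr ⟨(inlEdge_injective huv).ne hadj.ne, inl w, ?_, ?_⟩
    · rw [coe_inlEdge fun h => h₁ (Subtype.ext h)]
      exact Sym2.mem_map.mpr ⟨w, hw₁, rfl⟩
    · rw [coe_inlEdge fun h => h₂ (Subtype.ext h)]
      exact Sym2.mem_map.mpr ⟨w, hw₂, rfl⟩

noncomputable def inrHom (huv' : X'.Adj u' v') :
    X'.lineGraph.deleteIncidenceSet ⟨s(u', v'), huv'⟩ →g (Y).lineGraph where
  toFun := inrEdge
  map_rel' {D₁ D₂} h := by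
    obtain ⟨hadj, h₁, h₂⟩ := deleteIncidenceSet_adj.mp h
    obtain ⟨-, w, hw₁, hw₂⟩ := lineGraph_adj_iff_exists.mp hadj
    refine lineGraph_adj_iff_exists.mpr ⟨(inrEdge_injective huv').ne hadj.ne, inr w, ?_, ?_⟩
    · rw [coe_inrEdge fun h => h₁ (Subtype.ext h)]
      exact Sym2.mem_map.mpr ⟨w, hw₁, rfl⟩
    · rw [coe_inrEdge fun h => h₂ (Subtype.ext h)]
      exact Sym2.mem_map.mpr ⟨w, hw₂, rfl⟩

noncomputable def inlWalk (huv : X.Adj u v) {f g : X.edgeSet} (p : X.lineGraph.Walk f g)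
    (hp : ⟨s(u, v), huv⟩ ∉ p.support) : (Y).lineGraph.Walk (inlEdge f) (inlEdge g) :=
  (p.transfer _ (p.edges_subset_edgeSet_deleteIncidenceSet hp)).map (inlHom huv)

noncomputable def inrWalk (huv' : X'.Adj u' v') {f g : X'.edgeSet} (p : X'.lineGraph.Walk f g)
    (hp : ⟨s(u', v'), huv'⟩ ∉ p.support) : (Y).lineGraph.Walk (inrEdge f) (inrEdge g) :=
  (p.transfer _ (p.edges_subset_edgeSet_deleteIncidenceSet hp)).map (inrHom huv')

section Walks

variable (huv : X.Adj u v) (huv' : X'.Adj u' v') {f g : X.edgeSet} {f' g' : X'.edgeSet}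
  (p : X.lineGraph.Walk f g) (hp : ⟨s(u, v), huv⟩ ∉ p.support)
  (p' : X'.lineGraph.Walk f' g') (hp' : ⟨s(u', v'), huv'⟩ ∉ p'.support)

theorem support_inlWalk :
    (inlWalk huv p hp : (Y).lineGraph.Walk _ _).support = p.support.map inlEdge :=
  (Walk.support_map _ _).trans (congrArg _ (support_transfer _ _))

theorem edges_inlWalk :
    (inlWalk huv p hp : (Y).lineGraph.Walk _ _).edges = p.edges.map (Sym2.map inlEdge) :=
  (Walk.edges_map _ _).trans (congrArg _ (edges_transfer _ _))

theorem support_inrWalk :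
    (inrWalk huv' p' hp' : (Y).lineGraph.Walk _ _).support = p'.support.map inrEdge :=
  (Walk.support_map _ _).trans (congrArg _ (support_transfer _ _))

theorem edges_inrWalk :
    (inrWalk huv' p' hp' : (Y).lineGraph.Walk _ _).edges = p'.edges.map (Sym2.map inrEdge) :=
  (Walk.edges_map _ _).trans (congrArg _ (edges_transfer _ _))

end Walks

section splicePath

variable (huv : X.Adj u v) (huv' : X'.Adj u' v') {f g : X.edgeSet} {f' g' : X'.edgeSet}
  {p : X.lineGraph.Walk f g} {p' : X'.lineGraph.Walk f' g'}
  (hE : ⟨s(u, v), huv⟩ ∉ p.support) (hE' : ⟨s(u', v'), huv'⟩ ∉ p'.support)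
  (h₁ : (insertSimple X X' u v u' v').lineGraph.Adj (inrEdge g') edgeV)
  (h₂ : (insertSimple X X' u v u' v').lineGraph.Adj edgeV (inlEdge g))

noncomputable def splicePath : (Y).lineGraph.Walk (inrEdge f') (inlEdge f) :=
  (inrWalk huv' p' hE').append (cons h₁ (cons h₂ (inlWalk huv p hE).reverse))

theorem support_splicePath : (splicePath huv huv' hE hE' h₁ h₂).support =
    p'.support.map inrEdge ++ edgeV :: (p.support.map inlEdge).reverse := by
  simp only [splicePath, support_append, support_cons, List.tail_cons, support_reverse,
    support_inlWalk, support_inrWalk]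

theorem edges_splicePath : (splicePath huv huv' hE hE' h₁ h₂).edges =
    p'.edges.map (Sym2.map inrEdge) ++ s(inrEdge g', edgeV) :: s(edgeV, inlEdge g) ::
      (p.edges.map (Sym2.map inlEdge)).reverse := by
  simp only [splicePath, edges_append, edges_cons, edges_reverse, edges_inlWalk, edges_inrWalk]

theorem isPath_splicePath (hp : p.IsPath) (hp' : p'.IsPath) :
    (splicePath huv huv' hE hE' h₁ h₂).IsPath := by
  have hl : ∀ D ∈ p.support, (D : Sym2 W) ≠ s(u, v) :=
    fun D hD h => hE ((Subtype.ext h : D = ⟨s(u, v), huv⟩) ▸ hD)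
  have hr : ∀ D ∈ p'.support, (D : Sym2 W') ≠ s(u', v') :=
    fun D hD h => hE' ((Subtype.ext h : D = ⟨s(u', v'), huv'⟩) ▸ hD)
  rw [isPath_def, support_splicePath, List.nodup_append, List.nodup_cons, List.nodup_reverse]
  refine ⟨hp'.support_nodup.map (inrEdge_injective huv'),
    ⟨?_, hp.support_nodup.map (inlEdge_injective huv)⟩, ?_⟩
  · simp only [List.mem_reverse, List.mem_map, not_exists, not_and]
    exact fun D hD => inlEdge_ne_edgeV huv (hl D hD)
  · simp only [List.mem_map, List.mem_cons, List.mem_reverse]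
    rintro _ ⟨D', hD', rfl⟩ _ (rfl | ⟨D, hD, rfl⟩)
    exacts [inrEdge_ne_edgeV huv' (hr D' hD'), inrEdge_ne_inlEdge huv (hl D hD) D']

theorem mem_support_splicePath_iff (hsupp : ∀ D, D ∈ p.support ↔ D ≠ ⟨s(u, v), huv⟩)
    (hsupp' : ∀ D, D ∈ p'.support ↔ D ≠ ⟨s(u', v'), huv'⟩) (F : (Y).edgeSet) :
    F ∈ (splicePath huv huv' hE hE' h₁ h₂).support ↔ F ≠ edgeU := by
  simp only [support_splicePath, List.mem_append, List.mem_cons, List.mem_reverse, List.mem_map]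
  constructor
  · rintro (⟨D, hD, rfl⟩ | rfl | ⟨D, hD, rfl⟩)
    · exact inrEdge_ne_edgeU huv' fun h => (hsupp' D).mp hD (Subtype.ext h)
    · exact (edgeU_ne_edgeV huv).symm
    · exact inlEdge_ne_edgeU huv fun h => (hsupp D).mp hD (Subtype.ext h)
  · intro hF
    rcases inlEdge_or_inrEdge_or_edgeU_or_edgeV F with
      ⟨D, hD, rfl⟩ | ⟨D, hD, rfl⟩ | rfl | rfl
    · exact Or.inr (Or.inr ⟨D, (hsupp D).mpr fun h => hD (congrArg Subtype.val h), rfl⟩)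
    · exact Or.inl ⟨D, (hsupp' D).mpr fun h => hD (congrArg Subtype.val h), rfl⟩
    · exact absurd rfl hF
    · exact Or.inr (Or.inl rfl)

end splicePath

def LiesOver (huv : X.Adj u v) (huv' : X'.Adj u' v') {a : (Y).edgeSet} {x : X.edgeSet}
    {x' : X'.edgeSet} (d : (Y).lineGraph.Walk a a) (c : X.lineGraph.Walk x x)
    (c' : X'.lineGraph.Walk x' x') : Prop :=
  ∀ e ∈ d.edges,
    Sym2.map (projLeft huv) e ∈ c.edges ∨ Sym2.map (projRight huv') e ∈ c'.edges

theorem exists_isHamiltonianCycle_liesOver (huv : X.Adj u v) (huv' : X'.Adj u' v')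
    [DecidableEq X.edgeSet] [DecidableEq X'.edgeSet] [DecidableEq (Y).edgeSet]
    {x : X.edgeSet} {c : X.lineGraph.Walk x x} {x' : X'.edgeSet} {c' : X'.lineGraph.Walk x' x'}
    (hc : c.IsHamiltonianCycle) (hc' : c'.IsHamiltonianCycle)
    (hcomp : CompatAt c ⟨s(u, v), huv⟩ u v) (hcomp' : CompatAt c' ⟨s(u', v'), huv'⟩ u' v') :
    ∃ d : (Y).lineGraph.Walk edgeU edgeU, d.IsHamiltonianCycle ∧ LiesOver huv huv' d c c' := by
  obtain ⟨f, g, hfg, hN, hfu, hgv⟩ := hcomp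
  obtain ⟨hEf, hgE, p, hp, hsupp, hcp⟩ := hc.exists_path_of_setOf_mem_edges_eq hfg hN
  obtain ⟨f', g', hfg', hN', hfu', hgv'⟩ := hcomp'
  obtain ⟨hEf', hgE', p', hp', hsupp', hcp'⟩ := hc'.exists_path_of_setOf_mem_edges_eq hfg' hN'
  have hf : (f : Sym2 W) ≠ s(u, v) := fun h => hEf.ne (Subtype.ext h).symm
  have hg : (g : Sym2 W) ≠ s(u, v) := fun h => hgE.ne (Subtype.ext h)
  have hf' : (f' : Sym2 W') ≠ s(u', v') := fun h => hEf'.ne (Subtype.ext h).symm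
  have hg' : (g' : Sym2 W') ≠ s(u', v') := fun h => hgE'.ne (Subtype.ext h)
  have hE : ⟨s(u, v), huv⟩ ∉ p.support := fun h => (hsupp _).mp h rfl
  have hE' : ⟨s(u', v'), huv'⟩ ∉ p'.support := fun h => (hsupp' _).mp h rfl
  have h₁ : (Y).lineGraph.Adj (inrEdge g') edgeV := inrEdge_adj_edgeV huv' hg' hgv'
  have h₂ : (Y).lineGraph.Adj edgeV (inlEdge g) := edgeV_adj_inlEdge huv hg hgv
  refine ⟨_, (isPath_splicePath huv huv' hE hE' h₁ h₂ hp hp').isHamiltonianCycle_cons_concat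
    (mem_support_splicePath_iff huv huv' hE hE' h₁ h₂ hsupp hsupp')
    (inrEdge_ne_inlEdge huv hf f') (edgeU_adj_inrEdge huv' hf' hfu')
    (inlEdge_adj_edgeU huv hf hfu), fun e he => ?_⟩
  simp only [edges_cons, edges_concat, edges_splicePath, List.mem_cons, List.concat_eq_append,
    List.mem_append, List.mem_reverse, List.mem_map, List.not_mem_nil, or_false] at he
  simp only [hcp, hcp', edges_cons, edges_concat, List.concat_eq_append, List.mem_cons,
    List.mem_append, List.not_mem_nil, or_false]
  rcases he with rfl | (⟨e₀, he₀, rfl⟩ | rfl | rfl | ⟨e₀, he₀, rfl⟩) | rfl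
  · simp
  · simp [Sym2.map_map, he₀]
  · simp
  · simp
  · simp [Sym2.map_map, he₀]
  · simp

theorem projLeft_eq_or_projRight_eq_of_adj (huv : X.Adj u v) (huv' : X'.Adj u' v')
    {F G : (Y).edgeSet} (h : (Y).lineGraph.Adj F G) :
    projLeft huv F = projLeft huv G ∨ projRight huv' F = projRight huv' G := by
  obtain ⟨-, z | z, hF, hG⟩ := lineGraph_adj_iff_exists.mp h
  · exact Or.inr ((projRight_eq_of_inl_mem huv' hF).trans (projRight_eq_of_inl_mem huv' hG).symm)
  · exact Or.inl ((projLeft_eq_of_inr_mem huv hF).trans (projLeft_eq_of_inr_mem huv hG).symm)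

theorem LiesOver.edges_disjoint (huv : X.Adj u v) (huv' : X'.Adj u' v') {a₁ a₂ : (Y).edgeSet}
    {x₁ x₂ : X.edgeSet} {x₁' x₂' : X'.edgeSet} {d₁ : (Y).lineGraph.Walk a₁ a₁}
    {d₂ : (Y).lineGraph.Walk a₂ a₂} {c₁ : X.lineGraph.Walk x₁ x₁}
    {c₂ : X.lineGraph.Walk x₂ x₂}
    {c₁' : X'.lineGraph.Walk x₁' x₁'} {c₂' : X'.lineGraph.Walk x₂' x₂'}
    (h₁ : LiesOver huv huv' d₁ c₁ c₁') (h₂ : LiesOver huv huv' d₂ c₂ c₂')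
    (hc : ∀ e ∈ c₁.edges, e ∉ c₂.edges) (hc' : ∀ e ∈ c₁'.edges, e ∉ c₂'.edges) :
    ∀ e ∈ d₁.edges, e ∉ d₂.edges := by
  intro e he₁ he₂
  induction e using Sym2.ind with | _ F G => ?_
  rcases projLeft_eq_or_projRight_eq_of_adj huv huv' (d₁.adj_of_mem_edges he₁) with h | h
  · have hdiag : ∀ {x} (c : X.lineGraph.Walk x x), Sym2.map (projLeft huv) s(F, G) ∉ c.edges :=
      fun c => by rw [Sym2.map_mk, h]; exact c.mk_self_notMem_edges _
    exact hc' _ ((h₁ _ he₁).resolve_left (hdiag c₁))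
      ((h₂ _ he₂).resolve_left (hdiag c₂))
  · have hdiag : ∀ {x} (c : X'.lineGraph.Walk x x),
        Sym2.map (projRight huv') s(F, G) ∉ c.edges :=
      fun c => by rw [Sym2.map_mk, h]; exact c.mk_self_notMem_edges _
    exact hc _ ((h₁ _ he₁).resolve_right (hdiag c₁'))
      ((h₂ _ he₂).resolve_right (hdiag c₂'))

theorem inlEdge_or_edgeU_or_edgeV_of_adj {D : X.edgeSet} (hD : (D : Sym2 W) ≠ s(u, v))
    {G : (Y).edgeSet} (h : (Y).lineGraph.Adj (inlEdge D) G) :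
    (∃ H : X.edgeSet, (H : Sym2 W) ≠ s(u, v) ∧ inlEdge H = G) ∨
      (G = edgeU ∧ u ∈ (D : Sym2 W)) ∨ (G = edgeV ∧ v ∈ (D : Sym2 W)) := by
  obtain ⟨-, z, hzD, hzG⟩ := lineGraph_adj_iff_exists.mp h
  rw [coe_inlEdge hD, Sym2.mem_map] at hzD
  obtain ⟨w, hw, rfl⟩ := hzD
  rcases inlEdge_or_inrEdge_or_edgeU_or_edgeV G with hG | ⟨H, hH, rfl⟩ | rfl | rfl
  · exact Or.inl hG
  · rw [coe_inrEdge hH, Sym2.mem_map] at hzG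
    obtain ⟨_, -, h⟩ := hzG
    exact absurd h inr_ne_inl
  · obtain rfl : w = u := by simpa [edgeU] using hzG
    exact Or.inr (Or.inl ⟨rfl, hw⟩)
  · obtain rfl : w = v := by simpa [edgeV] using hzG
    exact Or.inr (Or.inr ⟨rfl, hw⟩)

theorem projRight_eq_of_adj_inlEdge (huv' : X'.Adj u' v') {D : X.edgeSet}
    (hD : (D : Sym2 W) ≠ s(u, v)) {G : (Y).edgeSet} (h : (Y).lineGraph.Adj (inlEdge D) G) :
    projRight huv' G = ⟨s(u', v'), huv'⟩ := by
  rcases inlEdge_or_edgeU_or_edgeV_of_adj hD h with ⟨_, -, rfl⟩ | ⟨rfl, -⟩ | ⟨rfl, -⟩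
  all_goals simp

theorem projLeft_injOn_neighborSet (huv : X.Adj u v) {D : X.edgeSet}
    (hD : (D : Sym2 W) ≠ s(u, v)) :
    Set.InjOn (projLeft huv) ((Y).lineGraph.neighborSet (inlEdge D)) := by
  intro G₁ h₁ G₂ h₂ h
  have huvD : ¬ (u ∈ (D : Sym2 W) ∧ v ∈ (D : Sym2 W)) :=
    fun h => hD ((Sym2.mem_and_mem_iff huv.ne).mp h)
  rcases inlEdge_or_edgeU_or_edgeV_of_adj hD h₁ with
      ⟨H₁, hH₁, rfl⟩ | ⟨rfl, hu₁⟩ | ⟨rfl, hv₁⟩ <;>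
    rcases inlEdge_or_edgeU_or_edgeV_of_adj hD h₂ with
      ⟨H₂, hH₂, rfl⟩ | ⟨rfl, hu₂⟩ | ⟨rfl, hv₂⟩ <;>
    simp only [projLeft_inlEdge, projLeft_edgeU, projLeft_edgeV] at h
  · exact congrArg inlEdge h
  · exact absurd (congrArg Subtype.val h) hH₁
  · exact absurd (congrArg Subtype.val h) hH₁
  · exact absurd (congrArg Subtype.val h.symm) hH₂
  · rfl
  · exact absurd ⟨hu₁, hv₂⟩ huvD
  · exact absurd (congrArg Subtype.val h.symm) hH₂
  · exact absurd ⟨hu₂, hv₁⟩ huvD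
  · rfl

theorem inl_mem_of_adj_inlEdge (huv : X.Adj u v) {D : X.edgeSet} (hD : (D : Sym2 W) ≠ s(u, v))
    {G : (Y).edgeSet} (h : (Y).lineGraph.Adj (inlEdge D) G) {w : W} (hwD : w ∈ (D : Sym2 W))
    (hwG : w ∈ (projLeft huv G : Sym2 W)) : inl w ∈ (G : Sym2 (W ⊕ W')) := by
  have huvD : ¬ (u ∈ (D : Sym2 W) ∧ v ∈ (D : Sym2 W)) :=
    fun h => hD ((Sym2.mem_and_mem_iff huv.ne).mp h)
  rcases inlEdge_or_edgeU_or_edgeV_of_adj hD h with ⟨H, hH, rfl⟩ | ⟨rfl, hu⟩ | ⟨rfl, hv⟩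
  · rw [projLeft_inlEdge] at hwG
    rw [coe_inlEdge hH]
    exact Sym2.mem_map.mpr ⟨w, hwG, rfl⟩
  · rw [projLeft_edgeU, Sym2.mem_iff] at hwG
    rcases hwG with rfl | rfl
    · simp [edgeU]
    · exact absurd ⟨hu, hwD⟩ huvD
  · rw [projLeft_edgeV, Sym2.mem_iff] at hwG
    rcases hwG with rfl | rfl
    · exact absurd ⟨hwD, hv⟩ huvD
    · simp [edgeV]

theorem LiesOver.compatAt (huv : X.Adj u v) (huv' : X'.Adj u' v') [DecidableEq (Y).edgeSet]
    {a₀ : (Y).edgeSet} {x : X.edgeSet} {x' : X'.edgeSet} {d : (Y).lineGraph.Walk a₀ a₀}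
    {c : X.lineGraph.Walk x x} {c' : X'.lineGraph.Walk x' x'} (hd : d.IsHamiltonianCycle)
    (hdc : LiesOver huv huv' d c c') {a b : W} {D : X.edgeSet} (hD : (D : Sym2 W) = s(a, b))
    (hDE : (D : Sym2 W) ≠ s(u, v)) (hcD : CompatAt c D a b) {F : (Y).edgeSet}
    (hF : (F : Sym2 (W ⊕ W')) = s(inl a, inl b)) : CompatAt d F (inl a) (inl b) := by
  obtain rfl : F = inlEdge D := Subtype.ext (by rw [hF, coe_inlEdge hDE, hD, Sym2.map_mk])
  obtain ⟨f₁, g₁, -, hN₁, haf, hbg⟩ := hcD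
  obtain ⟨F₁, G₁, hFG, hN⟩ := hd.exists_ne_setOf_mem_edges_eq (inlEdge D)
  have hnbr : ∀ G ∈ ({F₁, G₁} : Set (Y).edgeSet),
      (Y).lineGraph.Adj (inlEdge D) G ∧ projLeft huv G ∈ ({f₁, g₁} : Set X.edgeSet) := by
    intro G hG
    replace hG : s(inlEdge D, G) ∈ d.edges := by rw [← hN] at hG; exact hG
    have hadj := d.adj_of_mem_edges hG
    have hc := (hdc _ hG).resolve_right (by
      rw [Sym2.map_mk, projRight_inlEdge, projRight_eq_of_adj_inlEdge huv' hDE hadj]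
      exact c'.mk_self_notMem_edges _)
    rw [← hN₁]
    exact ⟨hadj, by simpa using hc⟩
  obtain ⟨hF₁, hF₁'⟩ := hnbr F₁ (by simp)
  obtain ⟨hG₁, hG₁'⟩ := hnbr G₁ (by simp)
  simp only [Set.mem_insert_iff, Set.mem_singleton_iff] at hF₁' hG₁'
  have hne : projLeft huv F₁ ≠ projLeft huv G₁ :=
    fun h => hFG (projLeft_injOn_neighborSet huv hDE hF₁ hG₁ h)
  have haD : a ∈ (D : Sym2 W) := hD ▸ Sym2.mem_mk_left a b
  have hbD : b ∈ (D : Sym2 W) := hD ▸ Sym2.mem_mk_right a b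
  rcases hF₁' with h₁ | h₁ <;> rcases hG₁' with h₂ | h₂
  · exact absurd (h₁.trans h₂.symm) hne
  · exact ⟨F₁, G₁, hFG, hN, inl_mem_of_adj_inlEdge huv hDE hF₁ haD (h₁ ▸ haf),
      inl_mem_of_adj_inlEdge huv hDE hG₁ hbD (h₂ ▸ hbg)⟩
  · exact ⟨G₁, F₁, hFG.symm, hN.trans (Set.pair_comm _ _),
      inl_mem_of_adj_inlEdge huv hDE hG₁ haD (h₂ ▸ haf),
      inl_mem_of_adj_inlEdge huv hDE hF₁ hbD (h₁ ▸ hbg)⟩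
  · exact absurd (h₁.trans h₂.symm) hne

end insertSimple

theorem lemmaA_general {W W' : Type*} (X : SimpleGraph W) (X' : SimpleGraph W')
    (u v : W) (u' v' : W') (huv : X.Adj u v) (huv' : X'.Adj u' v')
    (n : ℕ)
    (x : Fin n → X.edgeSet) (c : ∀ i, X.lineGraph.Walk (x i) (x i))
    (hc : IsHamDecompFam X.lineGraph x c)
    (hcompat : ∀ (i : Fin n) (E : X.edgeSet), (E : Sym2 W) = s(u, v) → CompatAt (c i) E u v)
    (x' : Fin n → X'.edgeSet) (c' : ∀ i, X'.lineGraph.Walk (x' i) (x' i))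
    (hc' : IsHamDecompFam X'.lineGraph x' c')
    (hcompat' : ∀ (i : Fin n) (E' : X'.edgeSet),
      (E' : Sym2 W') = s(u', v') → CompatAt (c' i) E' u' v') :
    ∃ (y : Fin n → (insertSimple X X' u v u' v').edgeSet)
      (d : ∀ i, (insertSimple X X' u v u' v').lineGraph.Walk (y i) (y i)),
      IsHamDecompFam (insertSimple X X' u v u' v').lineGraph y d ∧
        ∀ a b : W, X.Adj a b → s(a, b) ≠ s(u, v) →
          (∀ (i : Fin n) (E : X.edgeSet), (E : Sym2 W) = s(a, b) → CompatAt (c i) E a b) →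
          ∀ (i : Fin n) (F : (insertSimple X X' u v u' v').edgeSet),
            (F : Sym2 (W ⊕ W')) = s(Sum.inl a, Sum.inl b) →
            CompatAt (d i) F (Sum.inl a) (Sum.inl b) := by
  -- `IsHamDecompFam` fixes the classical `DecidableEq` instance on the edge sets, which is not
  -- the one instance search supplies to the lemmas above.
  have hcyc : ∀ i, (c i).IsHamiltonianCycle := fun i => by convert hc.1 i
  have hcyc' : ∀ i, (c' i).IsHamiltonianCycle := fun i => by convert hc'.1 i
  choose d hd hdc using fun i => insertSimple.exists_isHamiltonianCycle_liesOver huv huv'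
    (hcyc i) (hcyc' i) (hcompat i _ rfl) (hcompat' i _ rfl)
  refine ⟨fun _ => insertSimple.edgeU, d, ⟨fun i => by convert hd i, fun i j hij =>
    (hdc i).edges_disjoint huv huv' (hdc j) (hc.2 i j hij) (hc'.2 i j hij)⟩, ?_⟩
  intro a b hab hne hcomp i F hF
  exact (hdc i).compatAt huv huv' (hd i) (D := ⟨s(a, b), hab⟩) rfl hne (hcomp i _ rfl) hF

/-- **Lemma A.** Let `X, X'` be vertex-disjoint `k`-regular simple graphs, `uv`
an edge of `X`, `u'v'` an edge of `X'`, and `Y` the insertion of `X' - u'v'` into `uv`.  If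
`L(X)` has a Hamilton decomposition `H` that is Euler tour compatible at `uv` and `L(X')` has
a Hamilton decomposition `H'` that is Euler tour compatible at `u'v'`, then `L(Y)` has a
Hamilton decomposition `H*` such that whenever `H` is Euler tour compatible at a vertex
`xy ≠ uv` of `L(X)`, `H*` is Euler tour compatible at `xy`. -/
theorem lemmaA {W W' : Type*} (k : ℕ) (X : SimpleGraph W) (X' : SimpleGraph W')
    (u v : W) (u' v' : W') (huv : X.Adj u v) (huv' : X'.Adj u' v')
    (hX : RegularDeg X k) (hX' : RegularDeg X' k)
    (n : ℕ) (hn : n = k - 1)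
    (x : Fin n → X.edgeSet) (c : ∀ i, X.lineGraph.Walk (x i) (x i))
    (hc : IsHamDecompFam X.lineGraph x c)
    (hcompat : ∀ (i : Fin n) (E : X.edgeSet), (E : Sym2 W) = s(u, v) → CompatAt (c i) E u v)
    (x' : Fin n → X'.edgeSet) (c' : ∀ i, X'.lineGraph.Walk (x' i) (x' i))
    (hc' : IsHamDecompFam X'.lineGraph x' c')
    (hcompat' : ∀ (i : Fin n) (E' : X'.edgeSet),
      (E' : Sym2 W') = s(u', v') → CompatAt (c' i) E' u' v') :
    ∃ (y : Fin n → (insertSimple X X' u v u' v').edgeSet)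
      (d : ∀ i, (insertSimple X X' u v u' v').lineGraph.Walk (y i) (y i)),
      IsHamDecompFam (insertSimple X X' u v u' v').lineGraph y d ∧
        ∀ a b : W, X.Adj a b → s(a, b) ≠ s(u, v) →
          (∀ (i : Fin n) (E : X.edgeSet), (E : Sym2 W) = s(a, b) → CompatAt (c i) E a b) →
          ∀ (i : Fin n) (F : (insertSimple X X' u v u' v').edgeSet),
            (F : Sym2 (W ⊕ W')) = s(Sum.inl a, Sum.inl b) →
            CompatAt (d i) F (Sum.inl a) (Sum.inl b) :=
  lemmaA_general X X' u v u' v' huv huv' n x c hc hcompat x' c' hc' hcompat'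
end

section
/- Let k ≥ 4 and let X be the complete graph K_{k+1} with distinguished vertices v, u_1, u_2, u_3. For i = 1, 2, 3, let X'_i be a copy of K_{k+1} with an edge u'_i v'_i, and insert X'_i − u'_i v'_i into the edge u_i v of X. The resulting graph Y is a simple k-regular graph that has no Hamilton cycle. -/
open SimpleGraph
open scoped Classical

universe u v'

variable {V : Type*}

/-- The graph `Y` of the theorem: a complete graph `K_{k+1}` with distinguished vertices
`v, u 0, u 1, u 2`, with a copy of `K_{k+1}` minus the edge `{0, 1}` inserted into each of
the three edges `v (u i)`: the edge `v (u i)` and the edge `{0, 1}` of the `i`-th copy are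
replaced by an edge from `u i` to the vertex `(i, 0)` and an edge from `v` to `(i, 1)`. -/
def Ygraph (k : ℕ) (v : Fin (k + 1)) (u : Fin 3 → Fin (k + 1)) :
    SimpleGraph (Fin (k + 1) ⊕ Fin 3 × Fin (k + 1)) :=
  SimpleGraph.fromRel (fun x y =>
    match x, y with
    | Sum.inl a, Sum.inl b => ∀ i : Fin 3, s(a, b) ≠ s(v, u i)
    | Sum.inr (i, a), Sum.inr (j, b) => i = j ∧ s(a, b) ≠ s((0 : Fin (k + 1)), 1)
    | Sum.inl a, Sum.inr (i, b) => (a = u i ∧ b = 0) ∨ (a = v ∧ b = 1)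
    | _, _ => False)

/-!
Regularity: every vertex of `Y` keeps its degree `k` from the complete graph it comes from,
since each edge removed at a vertex is replaced by exactly one new edge at it.

Non-Hamiltonicity: the vertices of the `i`-th inserted copy are joined to the rest of `Y` by
just the two edges `u i — (i, 0)` and `v — (i, 1)`. A closed trail that enters and leaves a
vertex set crosses its boundary at least twice, through distinct edges, so a Hamilton cycle
uses both edges of each of these three cuts; it then uses the three edges `v — (i, 1)` at `v`,
while a cycle has only two edges at each of its vertices.
-/

theorem Set.ncard_eq_ncard_preimage_inl_add {α β : Type*} [Finite α] [Finite β]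
    (s : Set (α ⊕ β)) : s.ncard = (Sum.inl ⁻¹' s).ncard + (Sum.inr ⁻¹' s).ncard :=
  (Nat.card_congr Equiv.subtypeSum).trans Nat.card_sum

namespace SimpleGraph.Walk

variable {G : SimpleGraph V} {w : V}

theorem IsTrail.exists_two_boundary_darts_of_start_mem {c : G.Walk w w} (hc : c.IsTrail)
    {S : Set V} (hw : w ∈ S) {y : V} (hy : y ∈ c.support) (hyS : y ∉ S) :
    ∃ d₁ d₂ : G.Dart, d₁.edge ∈ c.edges ∧ d₂.edge ∈ c.edges ∧ d₁.edge ≠ d₂.edge ∧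
      d₁.fst ∈ S ∧ d₁.snd ∉ S ∧ d₂.fst ∈ S ∧ d₂.snd ∉ S := by
  obtain ⟨d₁, hd₁, hd₁S⟩ := (c.takeUntil y hy).exists_boundary_dart S hw hyS
  obtain ⟨d₂, hd₂, hd₂S⟩ := (c.dropUntil y hy).exists_boundary_dart Sᶜ hyS (by simpa)
  have he₁ : d₁.edge ∈ (c.takeUntil y hy).edges := List.mem_map_of_mem hd₁
  have he₂ : d₂.symm.edge ∈ (c.dropUntil y hy).edges := by
    rw [Dart.edge_symm]
    exact List.mem_map_of_mem hd₂
  have hdisj : (c.takeUntil y hy).edges.Disjoint (c.dropUntil y hy).edges := by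
    have hnodup := hc.edges_nodup
    rw [← c.take_spec hy, edges_append] at hnodup
    exact List.disjoint_of_nodup_append hnodup
  exact ⟨d₁, d₂.symm, c.edges_takeUntil_subset_edges hy he₁,
    c.edges_dropUntil_subset_edges hy he₂, fun h => hdisj he₁ (h ▸ he₂),
    hd₁S.1, hd₁S.2, by simpa using hd₂S.2, hd₂S.1⟩

theorem IsTrail.exists_two_boundary_darts {c : G.Walk w w} (hc : c.IsTrail) {S : Set V}
    {x y : V} (hx : x ∈ c.support) (hxS : x ∈ S) (hy : y ∈ c.support) (hyS : y ∉ S) :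
    ∃ d₁ d₂ : G.Dart, d₁.edge ∈ c.edges ∧ d₂.edge ∈ c.edges ∧ d₁.edge ≠ d₂.edge ∧
      d₁.fst ∈ S ∧ d₁.snd ∉ S ∧ d₂.fst ∈ S ∧ d₂.snd ∉ S := by
  by_cases hw : w ∈ S
  · exact hc.exists_two_boundary_darts_of_start_mem hw hy hyS
  · obtain ⟨d₁, d₂, h₁, h₂, hne, h⟩ :=
      hc.exists_two_boundary_darts_of_start_mem (S := Sᶜ) hw hx (by simpa)
    refine ⟨d₁.symm, d₂.symm, by simpa, by simpa, by simpa, ?_⟩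
    simp_all

theorem IsTrail.mem_edges_of_boundary {c : G.Walk w w} (hc : c.IsTrail) {S : Set V}
    {x y : V} (hx : x ∈ c.support) (hxS : x ∈ S) (hy : y ∈ c.support) (hyS : y ∉ S)
    {e₁ e₂ : Sym2 V} (hcut : ∀ d : G.Dart, d.fst ∈ S → d.snd ∉ S → d.edge = e₁ ∨ d.edge = e₂) :
    e₁ ∈ c.edges ∧ e₂ ∈ c.edges := by
  obtain ⟨d₁, d₂, h₁, h₂, hne, hd₁, hd₁', hd₂, hd₂'⟩ := hc.exists_two_boundary_darts hx hxS hy hyS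
  rcases hcut d₁ hd₁ hd₁' with he₁ | he₁ <;> rcases hcut d₂ hd₂ hd₂' with he₂ | he₂
  · exact absurd (he₁.trans he₂.symm) hne
  · exact ⟨he₁ ▸ h₁, he₂ ▸ h₂⟩
  · exact ⟨he₂ ▸ h₂, he₁ ▸ h₁⟩
  · exact absurd (he₁.trans he₂.symm) hne

theorem IsCycle.ncard_setOf_mem_edges_eq_two {c : G.Walk w w} (hc : c.IsCycle) {x : V}
    (hx : x ∈ c.support) : {y | s(x, y) ∈ c.edges}.ncard = 2 := by
  convert hc.ncard_neighborSet_toSubgraph_eq_two hx using 2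
  ext y
  rw [Set.mem_ofPred_eq, ← mem_edges_toSubgraph, Subgraph.mem_edgeSet, Subgraph.mem_neighborSet]

end SimpleGraph.Walk

namespace Ygraph

variable {k : ℕ} {v : Fin (k + 1)} {u : Fin 3 → Fin (k + 1)}

@[simp]
theorem adj_inl_inl {a b : Fin (k + 1)} :
    (Ygraph k v u).Adj (.inl a) (.inl b) ↔ a ≠ b ∧ ∀ i, s(a, b) ≠ s(v, u i) := by
  simp only [Ygraph, fromRel_adj, ne_eq, Sum.inl.injEq, Sym2.eq_swap (a := b)]
  grind

@[simp]
theorem adj_inl_inr {a b : Fin (k + 1)} {i : Fin 3} :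
    (Ygraph k v u).Adj (.inl a) (.inr (i, b)) ↔ (a = u i ∧ b = 0) ∨ (a = v ∧ b = 1) := by
  simp [Ygraph]

@[simp]
theorem adj_inr_inl {a b : Fin (k + 1)} {i : Fin 3} :
    (Ygraph k v u).Adj (.inr (i, b)) (.inl a) ↔ (a = u i ∧ b = 0) ∨ (a = v ∧ b = 1) := by
  rw [adj_comm, adj_inl_inr]

@[simp]
theorem adj_inr_inr {a b : Fin (k + 1)} {i j : Fin 3} :
    (Ygraph k v u).Adj (.inr (i, a)) (.inr (j, b)) ↔ i = j ∧ a ≠ b ∧ s(a, b) ≠ s(0, 1) := by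
  simp only [Ygraph, fromRel_adj, ne_eq, Sum.inr.injEq, Prod.mk.injEq, Sym2.eq_swap (a := b)]
  grind

theorem card_neighborSet (x : Fin (k + 1) ⊕ Fin 3 × Fin (k + 1)) :
    Nat.card ((Ygraph k v u).neighborSet x) =
      {a | (Ygraph k v u).Adj x (.inl a)}.ncard + {p | (Ygraph k v u).Adj x (.inr p)}.ncard :=
  Set.ncard_eq_ncard_preimage_inl_add _

theorem card_neighborSet_inl (hu : Function.Injective u) (hvu : ∀ i, v ≠ u i)
    (a : Fin (k + 1)) : Nat.card ((Ygraph k v u).neighborSet (.inl a)) = k := by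
  rw [card_neighborSet]
  by_cases hav : a = v
  · subst hav
    have hinl : {b | (Ygraph k a u).Adj (.inl a) (.inl b)} = (insert a (Set.range u))ᶜ := by
      ext b; grind [Sym2.eq_iff, adj_inl_inl]
    have hinr : {p | (Ygraph k a u).Adj (.inl a) (.inr p)} = Set.range (·, 1) := by
      ext ⟨i, b⟩; grind [Sym2.eq_iff, adj_inl_inr]
    have hcard : (insert a (Set.range u)).ncard = 4 := by
      have hv : a ∉ Set.range u := fun ⟨i, h⟩ => hvu i h.symm
      rw [Set.ncard_insert_of_notMem hv, Set.ncard_range_of_injective hu, Nat.card_fin]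
    have hcompl := Set.ncard_add_ncard_compl (insert a (Set.range u))
    rw [hinl, hinr, Set.ncard_range_of_injective (Prod.mk_left_injective 1)]
    simp only [hcard, Nat.card_fin] at hcompl ⊢
    omega
  by_cases hau : ∃ i, a = u i
  · obtain ⟨i, rfl⟩ := hau
    have hinl : {b | (Ygraph k v u).Adj (.inl (u i)) (.inl b)} = {u i, v}ᶜ := by
      ext b; grind [Sym2.eq_iff, adj_inl_inl]
    have hinr : {p | (Ygraph k v u).Adj (.inl (u i)) (.inr p)} = {(i, 0)} := by
      ext ⟨j, b⟩; grind [Sym2.eq_iff, adj_inl_inr]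
    have hcompl := Set.ncard_add_ncard_compl {u i, v}
    rw [hinl, hinr, Set.ncard_singleton]
    simp only [Set.ncard_pair hav, Nat.card_fin] at hcompl
    omega
  · push Not at hau
    have hinl : {b | (Ygraph k v u).Adj (.inl a) (.inl b)} = {a}ᶜ := by
      ext b; grind [Sym2.eq_iff, adj_inl_inl]
    have hinr : {p | (Ygraph k v u).Adj (.inl a) (.inr p)} = ∅ := by
      ext ⟨j, b⟩; simp [hau, hav]
    rw [hinl, hinr, Set.ncard_compl, Set.ncard_singleton, Set.ncard_empty]
    simp

theorem card_neighborSet_inr [NeZero k] (i : Fin 3) (a : Fin (k + 1)) :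
    Nat.card ((Ygraph k v u).neighborSet (.inr (i, a))) = k := by
  have hinr : {p | (Ygraph k v u).Adj (.inr (i, a)) (.inr p)} =
      Prod.mk i '' {b | a ≠ b ∧ s(a, b) ≠ s(0, 1)} := by
    ext ⟨j, b⟩; grind [Sym2.eq_iff, adj_inr_inr]
  rw [card_neighborSet, hinr, Set.ncard_image_of_injective _ (Prod.mk_right_injective i)]
  have h01 : (0 : Fin (k + 1)) ≠ 1 := Fin.zero_ne_one'
  have hcompl := Set.ncard_add_ncard_compl {(0 : Fin (k + 1)), 1}
  simp only [Set.ncard_pair h01, Nat.card_fin] at hcompl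
  by_cases ha₀ : a = 0
  · subst ha₀
    have hinl : {b | (Ygraph k v u).Adj (.inr (i, 0)) (.inl b)} = {u i} := by
      ext b; simp
    have hcopy : {b : Fin (k + 1) | 0 ≠ b ∧ s(0, b) ≠ s(0, 1)} = {0, 1}ᶜ := by
      ext b; grind [Sym2.eq_iff]
    rw [hinl, hcopy, Set.ncard_singleton]
    omega
  by_cases ha₁ : a = 1
  · subst ha₁
    have hinl : {b | (Ygraph k v u).Adj (.inr (i, 1)) (.inl b)} = {v} := by
      ext b; simp
    have hcopy : {b : Fin (k + 1) | 1 ≠ b ∧ s(1, b) ≠ s(0, 1)} = {0, 1}ᶜ := by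
      ext b; grind [Sym2.eq_iff]
    rw [hinl, hcopy, Set.ncard_singleton]
    omega
  · have hinl : {b | (Ygraph k v u).Adj (.inr (i, a)) (.inl b)} = ∅ := by
      ext b; simp [ha₀, ha₁]
    have hcopy : {b : Fin (k + 1) | a ≠ b ∧ s(a, b) ≠ s(0, 1)} = {a}ᶜ := by
      ext b; grind [Sym2.eq_iff]
    rw [hinl, hcopy, Set.ncard_compl, Set.ncard_singleton, Set.ncard_empty]
    simp

theorem regularDeg [NeZero k] (hu : Function.Injective u) (hvu : ∀ i, v ≠ u i) :
    RegularDeg (Ygraph k v u) k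
  | .inl a => card_neighborSet_inl hu hvu a
  | .inr (i, a) => card_neighborSet_inr i a

theorem dart_edge_of_fst_mem_copy {i : Fin 3} (d : (Ygraph k v u).Dart)
    (hfst : d.fst ∈ Set.range fun b => .inr (i, b))
    (hsnd : d.snd ∉ Set.range fun b => .inr (i, b)) :
    d.edge = s(.inr (i, 0), .inl (u i)) ∨ d.edge = s(.inr (i, 1), .inl v) := by
  obtain ⟨⟨x, y⟩, hadj⟩ := d
  obtain ⟨a, rfl⟩ := hfst
  rcases y with b | ⟨j, b⟩
  · simp only [adj_inr_inl] at hadj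
    rcases hadj with ⟨rfl, rfl⟩ | ⟨rfl, rfl⟩ <;> simp [Dart.edge]
  · obtain ⟨rfl, -⟩ := adj_inr_inr.1 hadj
    exact absurd (Set.mem_range_self b) hsnd

theorem not_isHamiltonianCycle {w : Fin (k + 1) ⊕ Fin 3 × Fin (k + 1)}
    (c : (Ygraph k v u).Walk w w) : ¬ c.IsHamiltonianCycle := by
  intro hc
  have hcut (i : Fin 3) : s(.inr (i, 1), .inl v) ∈ c.edges :=
    (hc.isCycle.isTrail.mem_edges_of_boundary (S := Set.range fun b => .inr (i, b))
      (hc.mem_support _) (Set.mem_range_self 0) (hc.mem_support (.inl v)) (by simp)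
      dart_edge_of_fst_mem_copy).2
  have hsub : Set.range (fun i => .inr (i, 1)) ⊆ {y | s(.inl v, y) ∈ c.edges} := by
    rintro _ ⟨i, rfl⟩
    simpa [Sym2.eq_swap] using hcut i
  have hle := Set.ncard_le_ncard hsub
  rw [hc.isCycle.ncard_setOf_mem_edges_eq_two (hc.mem_support _),
    Set.ncard_range_of_injective (fun i j h => (Prod.mk.inj (Sum.inr_injective h)).1),
    Nat.card_fin] at hle
  omega

end Ygraph

/-- For `k ≥ 4`, the graph `Y` obtained from `K_{k+1}` (with distinguished
distinct vertices `v, u₁, u₂, u₃`) by inserting a copy of `K_{k+1}` minus an edge into each of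
the edges `u_i v` is a simple `k`-regular graph with no Hamilton cycle. -/
theorem Ygraph_regular_non_hamiltonian (k : ℕ) (hk : 4 ≤ k) (v : Fin (k + 1))
    (u : Fin 3 → Fin (k + 1)) (hinj : Function.Injective u) (hvu : ∀ i, v ≠ u i) :
    RegularDeg (Ygraph k v u) k ∧
      ∀ (w : Fin (k + 1) ⊕ Fin 3 × Fin (k + 1)) (c : (Ygraph k v u).Walk w w),
        ¬ c.IsHamiltonianCycle := by
  have : NeZero k := ⟨by omega⟩
  exact ⟨Ygraph.regularDeg hinj hvu, fun _ c => Ygraph.not_isHamiltonianCycle c⟩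
end

section
/- A Hamilton decomposition of L(X) that is everywhere Euler tour compatible is equivalent to a perfect set of Euler tours of X: given such a decomposition one obtains a set S of Euler tours of X in which every 2-path of X occurs in exactly one tour of S, and conversely. -/
open SimpleGraph
open scoped Classical

universe u v'

variable {V : Type*}

/-- The 2-path `{f, g}` (a pair of adjacent edges of `X`) occurs in the closed walk `p` if
`f` and `g` are cyclically consecutive in the edge sequence of `p`. -/
def TwoPathIn {W : Type*} {X : SimpleGraph W} {x : W} (p : X.Walk x x)
    (f g : Sym2 W) : Prop :=
  ∃ l : List (Sym2 W), (f :: g :: l) ~r p.edges ∨ (g :: f :: l) ~r p.edges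

/-!
Read an Euler tour of `X` as the cyclic sequence of its edges. Consecutive edges of the tour
share an endpoint and every edge occurs once, so the sequence is a Hamilton cycle of `L(X)`;
it is Euler tour compatible everywhere because the tour enters each edge through one endpoint
and leaves it through the other. Conversely, compatibility of a Hamilton cycle of `L(X)` at
every vertex says that each edge `e` of `X` joins its common endpoint with the preceding edge
to its common endpoint with the following edge, so these common endpoints form a closed walk
traversing every edge once. In this correspondence the 2-paths occurring in a tour are exactly
the edges of its Hamilton cycle, so a perfect set of tours is the same thing as a set of
edge-disjoint compatible Hamilton cycles covering `L(X)`.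
-/

namespace List

variable {α β : Type*}

/-- `TwoPathIn p f g` is `p.edges.CyclicAdj f g`. -/
def CyclicAdj (l : List α) (x y : α) : Prop :=
  ∃ t, (x :: y :: t) ~r l ∨ (y :: x :: t) ~r l

def cyclicEdges (l : List α) : List (Sym2 α) :=
  zipWith (fun x y => s(x, y)) l (l.rotate 1)

theorem rotate_eq_cons_cons {l : List α} (hl : 2 ≤ l.length) {i : ℕ} (hi : i < l.length) :
    l.rotate i = l[i] :: l[(i + 1) % l.length]'(Nat.mod_lt _ (by omega)) ::
      (l.rotate i).drop 2 := by
  have h : 2 ≤ (l.rotate i).length := by simpa using hl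
  conv_lhs => rw [← (l.rotate i).drop_zero, drop_eq_getElem_cons (by omega),
    drop_eq_getElem_cons (by omega)]
  simp only [getElem_rotate, Nat.zero_add, Nat.mod_eq_of_lt hi, Nat.add_comm 1 i]

theorem rotate_eq_cons_cons_cons {l : List α} (hl : 3 ≤ l.length) {i : ℕ} (hi : i < l.length) :
    l.rotate i = l[i] :: l[(i + 1) % l.length]'(Nat.mod_lt _ (by omega)) ::
      l[(i + 2) % l.length]'(Nat.mod_lt _ (by omega)) :: (l.rotate i).drop 3 := by
  have h : 3 ≤ (l.rotate i).length := by simpa using hl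
  conv_lhs => rw [← (l.rotate i).drop_zero, drop_eq_getElem_cons (by omega),
    drop_eq_getElem_cons (by omega), drop_eq_getElem_cons (by omega)]
  simp only [getElem_rotate, Nat.zero_add, Nat.mod_eq_of_lt hi, Nat.add_comm 1 i,
    Nat.add_comm 2 i]

theorem exists_isRotated_cons_cons_cons {l : List α} (hl : 3 ≤ l.length) {e : α} (he : e ∈ l) :
    ∃ d f t, l ~r d :: e :: f :: t := by
  obtain ⟨j, hj, rfl⟩ := getElem_of_mem he
  have hi : (j + l.length - 1) % l.length < l.length := Nat.mod_lt _ (by omega)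
  have hj' : ((j + l.length - 1) % l.length + 1) % l.length = j := by
    rw [Nat.mod_add_mod, show j + l.length - 1 + 1 = j + l.length by omega, Nat.add_mod_right,
      Nat.mod_eq_of_lt hj]
  have hrot := rotate_eq_cons_cons_cons hl hi
  simp only [hj'] at hrot
  exact ⟨_, _, _, hrot ▸ (IsRotated.forall l _).symm⟩

theorem IsRotated.exists_cons_cons_cons_of_map {f : α → β} {l : List α} {b₁ b₂ b₃ : β}
    {t : List β} (h : l.map f ~r b₁ :: b₂ :: b₃ :: t) :
    ∃ a₁ a₂ a₃ t', l ~r a₁ :: a₂ :: a₃ :: t' ∧ f a₁ = b₁ ∧ f a₂ = b₂ ∧ f a₃ = b₃ := by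
  obtain ⟨n, hn⟩ := h
  rw [← map_rotate] at hn
  match hm : l.rotate n, hn with
  | a₁ :: a₂ :: a₃ :: t', hn =>
    simp only [map_cons, cons.injEq] at hn
    exact ⟨a₁, a₂, a₃, t', ⟨n, hm⟩, hn.1, hn.2.1, hn.2.2.1⟩

theorem IsRotated.cyclicAdj_iff {l l' : List α} (h : l ~r l') {x y : α} :
    CyclicAdj l x y ↔ CyclicAdj l' x y :=
  exists_congr fun _ =>
    or_congr ⟨(·.trans h), (·.trans h.symm)⟩ ⟨(·.trans h), (·.trans h.symm)⟩

theorem cyclicAdj_iff_getElem {l : List α} {x y : α} :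
    CyclicAdj l x y ↔ 2 ≤ l.length ∧
      ∃ (i : ℕ) (hi : i < l.length), s(l[i], l[(i + 1) % l.length]'(Nat.mod_lt _ (by omega)))
        = s(x, y) := by
  constructor
  · rintro ⟨t, h | h⟩ <;>
    · obtain ⟨n, hn⟩ := h.symm
      have hl : 2 ≤ l.length := by have := congrArg length hn; simp at this; omega
      have hlt : n % l.length < l.length := Nat.mod_lt _ (by omega)
      rw [← rotate_mod, rotate_eq_cons_cons hl hlt] at hn
      simp only [cons.injEq] at hn
      exact ⟨hl, _, hlt, by rw [hn.1, hn.2.1]; try exact Sym2.eq_swap⟩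
  · rintro ⟨hl, i, hi, h⟩
    have hrot : l.rotate i ~r l := IsRotated.forall l i
    rw [rotate_eq_cons_cons hl hi] at hrot
    rcases Sym2.eq_iff.mp h with ⟨rfl, rfl⟩ | ⟨rfl, rfl⟩
    · exact ⟨_, Or.inl hrot⟩
    · exact ⟨_, Or.inr hrot⟩

theorem cyclicAdj_map_iff {f : α → β} (hf : Function.Injective f) {l : List α} {x y : α} :
    CyclicAdj (l.map f) (f x) (f y) ↔ CyclicAdj l x y := by
  simp only [cyclicAdj_iff_getElem, length_map, getElem_map]
  refine and_congr_right fun _ => exists_congr fun i => exists_congr fun hi => ?_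
  rw [← Sym2.map_mk, ← Sym2.map_mk, (Sym2.map.injective hf).eq_iff]

theorem CyclicAdj.ne {l : List α} (hl : l.Nodup) {x y : α} (h : CyclicAdj l x y) : x ≠ y := by
  rintro rfl
  obtain ⟨t, h | h⟩ := h <;> simpa using h.nodup_iff.mpr hl

theorem cyclicAdj_iff_of_isRotated {l : List α} (hl : l.Nodup) {d e f : α} {t : List α}
    (h : l ~r d :: e :: f :: t) {y : α} : CyclicAdj l e y ↔ y = d ∨ y = f := by
  rw [h.cyclicAdj_iff]
  replace hl : (d :: e :: f :: t).Nodup := h.nodup_iff.mp hl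
  constructor
  · intro hy
    obtain ⟨-, i, hi, hs⟩ := cyclicAdj_iff_getElem.mp hy
    have hk : 3 ≤ (d :: e :: f :: t).length := by simp
    rcases Sym2.eq_iff.mp hs with ⟨he, rfl⟩ | ⟨rfl, he⟩
    · obtain rfl : i = 1 := (hl.getElem_inj_iff (j := 1) (hj := by omega)).mp he
      right
      simp only [Nat.mod_eq_of_lt (show 1 + 1 < (d :: e :: f :: t).length by simp)]
      rfl
    · have : (i + 1) % (d :: e :: f :: t).length = 1 :=
        (hl.getElem_inj_iff (j := 1) (hj := by omega)).mp he
      obtain rfl : i = 0 := by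
        rcases Nat.lt_or_ge (i + 1) (d :: e :: f :: t).length with hlt | hge
        · rw [Nat.mod_eq_of_lt hlt] at this; omega
        · rw [show i + 1 = (d :: e :: f :: t).length by omega, Nat.mod_self] at this
          omega
      simp
  · rintro (rfl | rfl)
    · exact ⟨f :: t, Or.inr (IsRotated.refl _)⟩
    · exact ⟨t ++ [d], Or.inl (IsRotated.symm ⟨1, by simp⟩)⟩

@[simp]
theorem length_cyclicEdges (l : List α) : l.cyclicEdges.length = l.length := by
  simp [cyclicEdges]

@[simp]
theorem getElem_cyclicEdges (l : List α) (i : ℕ) (hi : i < l.cyclicEdges.length) :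
    l.cyclicEdges[i] = s(l[i]'(by simpa using hi),
      l[(i + 1) % l.length]'(Nat.mod_lt _ (by simp at hi; omega))) := by
  simp only [cyclicEdges, getElem_zipWith, getElem_rotate]

theorem mem_cyclicEdges_iff {l : List α} (hl : l.length ≠ 1) {x y : α} :
    s(x, y) ∈ l.cyclicEdges ↔ CyclicAdj l x y := by
  rw [cyclicAdj_iff_getElem, mem_iff_getElem]
  simp only [length_cyclicEdges, getElem_cyclicEdges]
  exact ⟨fun ⟨i, hi, h⟩ => ⟨by omega, i, hi, h⟩, fun ⟨_, h⟩ => h⟩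

theorem cyclicEdges_rotate (l : List α) (n : ℕ) :
    (l.rotate n).cyclicEdges = l.cyclicEdges.rotate n := by
  rw [cyclicEdges, cyclicEdges, zipWith_rotate_distrib _ _ _ _ (by simp), rotate_rotate,
    rotate_rotate, Nat.add_comm]

theorem exists_mem_mem_of_cyclicAdj_cyclicEdges {l : List α} {e f : Sym2 α}
    (h : l.cyclicEdges.CyclicAdj e f) : ∃ v, v ∈ e ∧ v ∈ f := by
  obtain ⟨-, i, hi, hs⟩ := cyclicAdj_iff_getElem.mp h
  simp only [getElem_cyclicEdges, length_cyclicEdges] at hs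
  rcases Sym2.eq_iff.mp hs with ⟨rfl, rfl⟩ | ⟨rfl, rfl⟩
  · exact ⟨_, Sym2.mem_mk_right _ _, Sym2.mem_mk_left _ _⟩
  · exact ⟨_, Sym2.mem_mk_left _ _, Sym2.mem_mk_right _ _⟩

end List

/-- For an edge `e` of `X` whose neighbours on a Hamilton cycle of `L(X)` are `d` and `f`,
this is Euler tour compatibility of the cycle at `e`. -/
def Sym2.Threads {α : Type*} (d e f : Sym2 α) : Prop :=
  ∃ u v, e = s(u, v) ∧ u ∈ d ∧ v ∈ f

namespace List

variable {α : Type*}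

theorem threads_of_cyclicEdges_isRotated {l : List α} {d e f : Sym2 α} {t : List (Sym2 α)}
    (h : l.cyclicEdges ~r d :: e :: f :: t) : Sym2.Threads d e f := by
  obtain ⟨n, hn⟩ := h
  rw [← cyclicEdges_rotate] at hn
  set m := l.rotate n
  have hm : 3 ≤ m.length := by
    have := congrArg length hn
    simp only [length_cyclicEdges, length_cons] at this
    omega
  have hd : m.cyclicEdges[0]'(by simp; omega) = d := by simp only [hn]; rfl
  have he : m.cyclicEdges[1]'(by simp; omega) = e := by simp only [hn]; rfl
  have hf : m.cyclicEdges[2]'(by simp; omega) = f := by simp only [hn]; rfl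
  simp only [getElem_cyclicEdges, Nat.mod_eq_of_lt (show 1 < m.length by omega),
    Nat.mod_eq_of_lt (show 1 + 1 < m.length by omega)] at hd he hf
  exact ⟨m[1], m[2], he.symm, hd ▸ Sym2.mem_mk_right _ _, hf ▸ Sym2.mem_mk_left _ _⟩

theorem exists_cyclicEdges_eq_of_threads {L : List (Sym2 α)} (hL : 3 ≤ L.length) (hnd : L.Nodup)
    (hT : ∀ d e f t, L ~r d :: e :: f :: t → Sym2.Threads d e f) :
    ∃ vs : List α, vs.cyclicEdges = L.rotate 1 := by
  set k := L.length
  have hk : 0 < k := by omega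
  have hT' : ∀ i (hi : i < k), Sym2.Threads L[i] (L[(i + 1) % k]'(Nat.mod_lt _ hk))
      (L[(i + 2) % k]'(Nat.mod_lt _ hk)) := fun i hi =>
    hT _ _ _ _ (rotate_eq_cons_cons_cons hL hi ▸ (IsRotated.forall L i).symm)
  choose u v huv hu hv using hT'
  refine ⟨ofFn fun i : Fin k => u i i.2, ext_getElem (by simp [k]) fun i hi hi' => ?_⟩
  simp only [length_cyclicEdges, length_ofFn] at hi
  simp only [getElem_cyclicEdges, List.getElem_ofFn, length_ofFn, getElem_rotate]
  set j := (i + 1) % k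
  have hj : j < k := Nat.mod_lt _ hk
  have hj1 : (j + 1) % k = (i + 2) % k := by simp only [j, Nat.mod_add_mod]
  have hne : j ≠ (i + 2) % k := fun h => by
    have := Nat.sub_mod_eq_zero_of_mod_eq h.symm
    rw [show i + 2 - (i + 1) = 1 by omega, Nat.one_mod_eq_zero_iff] at this
    omega
  have huv' := huv j hj
  simp only [hj1] at huv'
  rw [huv i hi]
  congr
  -- both are common endpoints of the distinct edges `L[j]` and `L[(j + 1) % k]`
  by_contra h
  exact hne (hnd.getElem_inj_iff.mp (Sym2.eq_of_ne_mem h (hu j hj)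
    (huv i hi ▸ Sym2.mem_mk_right _ _) (huv' ▸ Sym2.mem_mk_left _ _) (hv i hi)))

end List

namespace SimpleGraph.Walk

variable {G : SimpleGraph V} {u : V}

theorem edges_eq_cyclicEdges (c : G.Walk u u) : c.edges = c.support.dropLast.cyclicEdges := by
  rw [edges_eq_zipWith_support]
  cases c with
  | nil => rfl
  | cons h p =>
    have hp : p.support = p.support.dropLast ++ [u] := by
      simp
    rw [support_cons, List.dropLast_cons_of_ne_nil p.support_ne_nil, List.tail_cons,
      List.cyclicEdges]
    conv_lhs => rw [hp, ← List.cons_append, ← List.append_nil (p.support.dropLast ++ [u]),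
      List.zipWith_append (by simp)]
    simp

theorem length_ne_one (c : G.Walk u u) : c.length ≠ 1 :=
  fun h => G.loopless.irrefl _ (adj_of_length_eq_one h)

theorem mem_edges_iff_cyclicAdj (c : G.Walk u u) {x y : V} :
    s(x, y) ∈ c.edges ↔ c.support.dropLast.CyclicAdj x y := by
  rw [edges_eq_cyclicEdges, List.mem_cyclicEdges_iff (by simpa using c.length_ne_one)]

theorem exists_support_dropLast_eq {l : List V} (hl : l ≠ [])
    (h : ∀ e ∈ l.cyclicEdges, e ∈ G.edgeSet) :
    ∃ (u : V) (c : G.Walk u u), c.support.dropLast = l := by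
  have hchain : (l ++ [l.head hl]).IsChain G.Adj := by
    rw [List.isChain_iff_getElem]
    intro i hi
    simp only [List.length_append, List.length_singleton] at hi
    have he := h _ (l.cyclicEdges.getElem_mem (by simp; omega : i < l.cyclicEdges.length))
    rw [List.getElem_cyclicEdges, SimpleGraph.mem_edgeSet] at he
    rw [List.getElem_append_left (by omega)]
    rcases Nat.lt_or_ge (i + 1) l.length with hlt | hge
    · simpa [List.getElem_append_left hlt, Nat.mod_eq_of_lt hlt] using he
    · have hk : i + 1 = l.length := by omega
      simp only [hk, Nat.mod_self] at he
      simpa [List.getElem_append_right hge, hk, List.head_eq_getElem] using he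
  refine ⟨l.head hl, (ofSupport _ (by simp) hchain).copy (List.head_append_of_ne_nil hl)
    List.getLast_concat, ?_⟩
  simp

theorem isHamiltonianCycle_of_support_dropLast [DecidableEq V] {c : G.Walk u u}
    (hc : 3 ≤ c.length) (hnd : c.support.dropLast.Nodup) (hall : ∀ v, v ∈ c.support.dropLast) :
    c.IsHamiltonianCycle := by
  have hnil : ¬ c.Nil := not_nil_iff_lt_length.mpr (by omega)
  have hperm := c.tail_support_perm_dropLast_support
  refine isHamiltonianCycle_iff_isCycle_and_support_count_tail_eq_one.mpr ⟨?_, fun v => ?_⟩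
  · refine isCycle_iff_isPath_tail_and_le_length.mpr ⟨?_, hc⟩
    rw [isPath_def, support_tail_of_not_nil _ hnil]
    exact hperm.nodup_iff.mpr hnd
  · rw [hperm.count_eq]
    exact List.count_eq_one_of_mem hnd (hall v)

theorem IsHamiltonianCycle.mem_support_dropLast [DecidableEq V] {c : G.Walk u u}
    (hc : c.IsHamiltonianCycle) (v : V) : v ∈ c.support.dropLast := by
  have := (isHamiltonianCycle_iff_isCycle_and_support_count_tail_eq_one.mp hc).2 v
  exact c.tail_support_perm_dropLast_support.mem_iff.mp (List.count_pos_iff.mp (by omega))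

end SimpleGraph.Walk

namespace SimpleGraph

variable {W : Type*} {X : SimpleGraph W} {E₀ : X.edgeSet}

theorem compatAt_iff_threads {c : X.lineGraph.Walk E₀ E₀} (hc : c.IsCycle) {D E F : X.edgeSet}
    {t : List X.edgeSet} (h : c.support.dropLast ~r D :: E :: F :: t) {u v : W}
    (huv : (E : Sym2 W) = s(u, v)) : CompatAt c E u v ↔ Sym2.Threads (D : Sym2 W) E F := by
  have hnd := h.nodup_iff.mp hc.nodup_dropLast_support
  have hDF : D ≠ F := fun hDF => (List.nodup_cons.mp hnd).1 (by simp [hDF])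
  have hnbr : {h : X.edgeSet | s(E, h) ∈ c.edges} = {D, F} := by
    ext g
    rw [Set.mem_ofPred_eq, Walk.mem_edges_iff_cyclicAdj,
      List.cyclicAdj_iff_of_isRotated hc.nodup_dropLast_support h]
    rfl
  simp only [CompatAt, hnbr, Set.pair_eq_pair_iff]
  constructor
  · rintro ⟨f, g, -, ⟨rfl, rfl⟩ | ⟨rfl, rfl⟩, hu, hv⟩
    · exact ⟨u, v, huv, hu, hv⟩
    · exact ⟨v, u, huv.trans Sym2.eq_swap, hv, hu⟩
  · rintro ⟨u', v', he, hu', hv'⟩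
    rcases Sym2.eq_iff.mp (huv.symm.trans he) with ⟨rfl, rfl⟩ | ⟨rfl, rfl⟩
    · exact ⟨D, F, hDF, Or.inl ⟨rfl, rfl⟩, hu', hv'⟩
    · exact ⟨F, D, hDF.symm, Or.inr ⟨rfl, rfl⟩, hv', hu'⟩

theorem twoPathIn_iff_mem_edges {c : X.lineGraph.Walk E₀ E₀} {a : W} {p : X.Walk a a}
    (hcp : c.support.dropLast.map Subtype.val ~r p.edges) (f g : X.edgeSet) :
    TwoPathIn p f g ↔ s(f, g) ∈ c.edges := by
  rw [Walk.mem_edges_iff_cyclicAdj, ← List.cyclicAdj_map_iff Subtype.val_injective,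
    hcp.cyclicAdj_iff]
  rfl

theorem compatAt_of_isRotated_edges [DecidableEq X.edgeSet] {c : X.lineGraph.Walk E₀ E₀}
    (hc : c.IsHamiltonianCycle) {a : W} {p : X.Walk a a}
    (hcp : c.support.dropLast.map Subtype.val ~r p.edges) (u v : W) (E : X.edgeSet)
    (huv : (E : Sym2 W) = s(u, v)) : CompatAt c E u v := by
  have h3 : 3 ≤ c.support.dropLast.length := by simpa using hc.isCycle.three_le_length
  obtain ⟨D, F, t, h⟩ := List.exists_isRotated_cons_cons_cons h3 (hc.mem_support_dropLast E)
  rw [compatAt_iff_threads hc.isCycle h huv]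
  refine List.threads_of_cyclicEdges_isRotated (l := p.support.dropLast)
    (t := t.map Subtype.val) ?_
  rw [← Walk.edges_eq_cyclicEdges]
  exact hcp.symm.trans (h.map Subtype.val)

theorem exists_isHamiltonianCycle_of_isEulerian [DecidableEq X.edgeSet] {a : W}
    {p : X.Walk a a} (hp : p.IsEulerian) (hne : X.edgeSet.Nonempty) :
    ∃ (E : X.edgeSet) (c : X.lineGraph.Walk E E),
      c.IsHamiltonianCycle ∧ c.support.dropLast.map Subtype.val ~r p.edges := by
  set C := p.edges.attachWith (· ∈ X.edgeSet) fun _ he => p.edges_subset_edgeSet he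
  have hC : C.map Subtype.val = p.edges := List.attachWith_map_subtype_val _
  have hnd : C.Nodup := .of_map Subtype.val (hC ▸ hp.isTrail.edges_nodup)
  have h3 : 3 ≤ p.length := by
    refine Walk.IsCircuit.three_le_length ⟨hp.isTrail, fun hnil => ?_⟩
    obtain ⟨e, he⟩ := hne
    simpa [hnil] using hp.mem_edges_iff.mpr he
  have hlen : C.length = p.length := by simp [C]
  have hadj : ∀ e ∈ C.cyclicEdges, e ∈ X.lineGraph.edgeSet := by
    intro e
    induction e using Sym2.ind with
    | _ f g =>
      intro hfg
      rw [List.mem_cyclicEdges_iff (by omega)] at hfg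
      refine lineGraph_adj_iff_exists.mpr ⟨hfg.ne hnd, ?_⟩
      rw [← List.cyclicAdj_map_iff Subtype.val_injective, hC, Walk.edges_eq_cyclicEdges] at hfg
      exact List.exists_mem_mem_of_cyclicAdj_cyclicEdges hfg
  obtain ⟨E, c, hc⟩ := Walk.exists_support_dropLast_eq (by rw [← List.length_pos_iff]; omega) hadj
  refine ⟨E, c, Walk.isHamiltonianCycle_of_support_dropLast ?_ (hc ▸ hnd) fun f => ?_, ?_⟩
  · have := congrArg List.length hc
    simp only [List.length_dropLast, Walk.length_support, Nat.add_sub_cancel, hlen] at this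
    omega
  · simpa [hc, C] using hp.mem_edges_iff.mpr f.2
  · rw [hc, hC]

theorem exists_isEulerian_of_isHamiltonianCycle [DecidableEq X.edgeSet]
    {c : X.lineGraph.Walk E₀ E₀} (hc : c.IsHamiltonianCycle)
    (hcompat : ∀ (u v : W) (E : X.edgeSet), (E : Sym2 W) = s(u, v) → CompatAt c E u v) :
    ∃ (a : W) (p : X.Walk a a), p.IsEulerian ∧ c.support.dropLast.map Subtype.val ~r p.edges := by
  set L := c.support.dropLast.map Subtype.val
  have h3 : 3 ≤ L.length := by simpa [L] using hc.isCycle.three_le_length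
  have hnd : L.Nodup := hc.isCycle.nodup_dropLast_support.map Subtype.val_injective
  have hT : ∀ d e f t, L ~r d :: e :: f :: t → Sym2.Threads d e f := by
    intro d e f t h
    obtain ⟨D, E, F, t', h', rfl, rfl, rfl⟩ := h.exists_cons_cons_cons_of_map
    obtain ⟨u, v, huv⟩ : ∃ u v, (E : Sym2 W) = s(u, v) := ⟨_, _, (Quot.out_eq _).symm⟩
    exact (compatAt_iff_threads hc.isCycle h' huv).mp (hcompat u v E huv)
  obtain ⟨vs, hvs⟩ := List.exists_cyclicEdges_eq_of_threads h3 hnd hT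
  have hmem : ∀ e, e ∈ vs.cyclicEdges ↔ e ∈ X.edgeSet := fun e => by
    rw [hvs, List.mem_rotate]
    exact ⟨fun he => by obtain ⟨E, -, rfl⟩ := List.mem_map.mp he; exact E.2,
      fun he => List.mem_map.mpr ⟨⟨e, he⟩, hc.mem_support_dropLast _, rfl⟩⟩
  have hvs0 : vs ≠ [] := by
    rw [← List.length_pos_iff, ← List.length_cyclicEdges, hvs, List.length_rotate]
    omega
  obtain ⟨a, p, hp⟩ := Walk.exists_support_dropLast_eq hvs0 fun e => (hmem e).mp
  have hedges : p.edges = L.rotate 1 := by rw [Walk.edges_eq_cyclicEdges, hp, hvs]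
  refine ⟨a, p, Walk.IsTrail.isEulerian_of_forall_mem ?_ fun e he => ?_, hedges ▸ ⟨1, rfl⟩⟩
  · rw [Walk.isTrail_def, hedges]
    exact List.nodup_rotate.mpr hnd
  · rw [Walk.edges_eq_cyclicEdges, hp]
    exact (hmem e).mpr he

end SimpleGraph

theorem everywhere_compatible_decomposition_iff_perfect_set_of_euler_tours_general {W : Type*}
    (X : SimpleGraph W) :
    (∃ (n : ℕ) (x : Fin n → X.edgeSet) (c : ∀ i, X.lineGraph.Walk (x i) (x i)),
        IsHamDecompFam X.lineGraph x c ∧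
        (∀ e ∈ X.lineGraph.edgeSet, ∃ i, e ∈ (c i).edges) ∧
        ∀ (i : Fin n) (u v : W) (E : X.edgeSet),
          (E : Sym2 W) = s(u, v) → CompatAt (c i) E u v) ↔
      (∃ (m : ℕ) (w : Fin m → W) (p : ∀ i, X.Walk (w i) (w i)),
        (∀ i, (p i).IsEulerian) ∧
        ∀ f g : X.edgeSet, X.lineGraph.Adj f g →
          ∃! i, TwoPathIn (p i) (f : Sym2 W) (g : Sym2 W)) := by
  constructor
  · rintro ⟨n, x, c, ⟨hham, hdisj⟩, hcover, hcompat⟩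
    -- `IsHamDecompFam` uses the classical `DecidableEq` instance, not the `Subtype` one found here
    choose w p hp hcp using fun i =>
      exists_isEulerian_of_isHamiltonianCycle (c := c i) (by convert hham i) (hcompat i)
    refine ⟨n, w, p, hp, fun f g hfg => ?_⟩
    obtain ⟨i, hi⟩ := hcover s(f, g) hfg
    refine ⟨i, (twoPathIn_iff_mem_edges (hcp i) f g).mpr hi, fun j hj => ?_⟩
    by_contra hji
    exact hdisj j i hji _ ((twoPathIn_iff_mem_edges (hcp j) f g).mp hj) hi
  · rintro ⟨m, w, p, hp, hperfect⟩
    rcases isEmpty_or_nonempty X.edgeSet with hempty | hne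
    · refine ⟨0, Fin.elim0, fun i => i.elim0, ⟨fun i => i.elim0, fun i => i.elim0⟩, ?_,
        fun i => i.elim0⟩
      intro e
      induction e using Sym2.ind with | _ f g => exact isEmptyElim f
    choose x c hc hcp using fun i =>
      exists_isHamiltonianCycle_of_isEulerian (hp i) (Set.nonempty_coe_sort.mp hne)
    refine ⟨m, x, c, ⟨fun i => by convert hc i, fun i j hij e hei hej => ?_⟩, fun e he => ?_,
      fun i => compatAt_of_isRotated_edges (hc i) (hcp i)⟩
    · induction e using Sym2.ind with
      | _ f g =>
        obtain ⟨k, -, hk⟩ := hperfect f g ((c i).adj_of_mem_edges hei)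
        exact hij ((hk i ((twoPathIn_iff_mem_edges (hcp i) f g).mpr hei)).trans
          (hk j ((twoPathIn_iff_mem_edges (hcp j) f g).mpr hej)).symm)
    · induction e using Sym2.ind with
      | _ f g =>
        obtain ⟨i, hi, -⟩ := hperfect f g he
        exact ⟨i, (twoPathIn_iff_mem_edges (hcp i) f g).mp hi⟩

/-- For a connected simple graph `X` all of whose degrees are even, a
Hamilton decomposition of `L(X)` that is everywhere Euler tour compatible is equivalent to a
perfect set of Euler tours of `X`: one exists if and only if the other does.  (A set of Euler
tours is perfect if every 2-path of `X` — every pair of adjacent edges — occurs in exactly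
one of the tours.) -/
theorem everywhere_compatible_decomposition_iff_perfect_set_of_euler_tours {W : Type*}
    [Fintype W] (X : SimpleGraph W) (hconn : X.Connected)
    (heven : ∀ w : W, Even (Nat.card (X.neighborSet w))) :
    (∃ (n : ℕ) (x : Fin n → X.edgeSet) (c : ∀ i, X.lineGraph.Walk (x i) (x i)),
        IsHamDecompFam X.lineGraph x c ∧
        (∀ e ∈ X.lineGraph.edgeSet, ∃ i, e ∈ (c i).edges) ∧
        ∀ (i : Fin n) (u v : W) (E : X.edgeSet),
          (E : Sym2 W) = s(u, v) → CompatAt (c i) E u v) ↔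
      (∃ (m : ℕ) (w : Fin m → W) (p : ∀ i, X.Walk (w i) (w i)),
        (∀ i, (p i).IsEulerian) ∧
        ∀ f g : X.edgeSet, X.lineGraph.Adj f g →
          ∃! i, TwoPathIn (p i) (f : Sym2 W) (g : Sym2 W)) :=
  everywhere_compatible_decomposition_iff_perfect_set_of_euler_tours_general X
end
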